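/- arXiv:2603.00955 — 4 statements merged into one kernel-verified Lean document; each statement's English description precedes it below -/
import Mathlib

section
/- Let p̂_1,...,p̂_m be [0,1]-valued random variables (p-values) for hypotheses H_1,...,H_m on a probability space, let I ⊆ {1,...,m} be the set of true null hypotheses, and assume each true null p-value is superuniform: P(p̂_i ≤ u) ≤ u for all u ∈ (0,1) and all i ∈ I. Fix k ∈ {1,...,m} and α ∈ (0,1), and set α_i = kα/m for i ≤ k and α_i = kα/(m+k−i) for i > k. Apply the stepdown procedure with these critical constants: letting p̂_(1) ≤ ... ≤ p̂_(m) be the ordered p-values, reject exactly the hypotheses corresponding to p̂_(1),...,p̂_(r) where r is the largest index such that p̂_(j) ≤ α_j for every j ≤ r (and reject nothing if p̂_(1) > α_1). Let V be the number of rejected true null hypotheses. Then the k-FWER is controlled: P(V ≥ k) ≤ α. -/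
open MeasureTheory ProbabilityTheory Finset
open scoped Classical

/-- **The Lehmann–Romano stepdown procedure controls the k-FWER.** Given p-values
`p̂_1,...,p̂_m` whose true-null members are superuniform, the stepdown procedure with
critical constants `α_i = kα/m` for `i ≤ k` and `α_i = kα/(m+k−i)` for `i > k` rejects
at least `k` true null hypotheses with probability at most `α`.

The rejection rule is encoded via a sorting permutation of the p-values: the
hypothesis occupying ascending position `j` is rejected iff every position `j' ≤ j`
satisfies `p̂_(j') ≤ α_{j'}`; this rejects exactly the hypotheses with the `r`
smallest p-values, where `r` is the largest index such that `p̂_(j) ≤ α_j` for all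
`j ≤ r` (and nothing if `p̂_(1) > α_1`). -/
theorem stepdown_kFWER_control
    {Ω : Type*} [MeasurableSpace Ω] (P : Measure Ω) [IsProbabilityMeasure P]
    (m : ℕ) (p : Ω → Fin m → ℝ)
    (hp01 : ∀ ω i, p ω i ∈ Set.Icc (0 : ℝ) 1)
    (I : Finset (Fin m))
    (hsuper : ∀ i ∈ I, ∀ u ∈ Set.Ioo (0 : ℝ) 1,
      P {ω | p ω i ≤ u} ≤ ENNReal.ofReal u)
    (k : ℕ) (hk1 : 1 ≤ k) (hkm : k ≤ m)
    (α : ℝ) (hα : α ∈ Set.Ioo (0 : ℝ) 1)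
    (a : Fin m → ℝ)
    (ha : ∀ i : Fin m, a i =
      if (i : ℕ) + 1 ≤ k then (k : ℝ) * α / (m : ℝ)
      else (k : ℝ) * α / (((m + k - ((i : ℕ) + 1) : ℕ) : ℝ)))
    (rejected : Ω → Fin m → Prop)
    (hrej : ∀ ω i, rejected ω i ↔ ∃ j : Fin m, Tuple.sort (p ω) j = i ∧
      ∀ j' : Fin m, j' ≤ j → p ω (Tuple.sort (p ω) j') ≤ a j') :
    P {ω | k ≤ (Finset.univ.filter fun i => i ∈ I ∧ rejected ω i).card}
      ≤ ENNReal.ofReal α := by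
  obtain ⟨hα0, hα1⟩ := hα
  set ℓ := I.card with hℓ
  by_cases hℓk : ℓ < k
  · -- fewer than k true nulls: the event is empty
    have hempty : {ω | k ≤ (Finset.univ.filter fun i => i ∈ I ∧ rejected ω i).card}
        = (∅ : Set Ω) := by
      ext ω
      simp only [Set.mem_setOf_eq, Set.mem_empty_iff_false, iff_false, not_le]
      calc (Finset.univ.filter fun i => i ∈ I ∧ rejected ω i).card
          ≤ I.card := Finset.card_le_card (fun i hi => (Finset.mem_filter.mp hi).2.1)
        _ < k := hℓk
    rw [hempty]
    simp
  push_neg at hℓk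
  have hℓm : ℓ ≤ m := by
    have := Finset.card_le_univ I
    simpa using this
  have hℓ0 : 0 < ℓ := lt_of_lt_of_le hk1 hℓk
  set u : ℝ := (k : ℝ) * α / ℓ with hu
  have hK : (0:ℝ) < (k:ℝ) * α := by
    have : (0:ℝ) < (k:ℝ) := by exact_mod_cast hk1
    positivity
  have hℓR : (0:ℝ) < (ℓ:ℝ) := by exact_mod_cast hℓ0
  have hu0 : 0 < u := by positivity
  have huα : u ≤ α := by
    rw [hu, div_le_iff₀ hℓR]
    have hkℓ : (k:ℝ) ≤ (ℓ:ℝ) := by exact_mod_cast hℓk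
    nlinarith
  have hu1 : u < 1 := lt_of_le_of_lt huα hα1
  -- Step A: the deterministic part
  have stepA : ∀ ω, k ≤ (Finset.univ.filter fun i => i ∈ I ∧ rejected ω i).card →
      k ≤ (I.filter fun i => p ω i ≤ u).card := by
    intro ω hcard
    set σ := Tuple.sort (p ω) with hσ
    set S := Finset.univ.filter fun i => i ∈ I ∧ rejected ω i with hS
    have hSI : ∀ i ∈ S, i ∈ I := fun i hi => (Finset.mem_filter.mp hi).2.1
    have hSD : ∀ i ∈ S, ∀ j' : Fin m, j' ≤ σ.symm i → p ω (σ j') ≤ a j' := by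
      intro i hi
      obtain ⟨j, hji, hcond⟩ := (hrej ω i).mp (Finset.mem_filter.mp hi).2.2
      have hj : σ.symm i = j := by rw [← hji]; exact σ.symm_apply_apply j
      rw [hj]; exact hcond
    set T := Finset.univ.filter (fun j : Fin m => σ j ∈ I) with hT
    have hTcard : T.card = ℓ := by
      rw [hℓ]
      apply Finset.card_bij (fun j _ => σ j)
      · intro j hj; exact (Finset.mem_filter.mp hj).2
      · intro j₁ h₁ j₂ h₂ h; exact σ.injective h
      · intro i hi
        exact ⟨σ.symm i, Finset.mem_filter.mpr ⟨Finset.mem_univ _, by simpa using hi⟩,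
          (σ.apply_symm_apply i)⟩
    set f := T.orderEmbOfFin hTcard with hf
    have hkℓ' : k - 1 < ℓ := by omega
    set i0 : Fin ℓ := ⟨k - 1, hkℓ'⟩ with hi0
    set t0 : Fin m := f i0 with ht0
    have ht0T : t0 ∈ T := Finset.orderEmbOfFin_mem T hTcard i0
    set W := Finset.univ.filter (fun j : Fin m => j ≤ t0 ∧ σ j ∈ I) with hW
    have hWeq : W = (Finset.Iic i0).image f := by
      ext j
      simp only [hW, Finset.mem_filter, Finset.mem_univ, true_and, Finset.mem_image,
        Finset.mem_Iic]
      constructor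
      · rintro ⟨hle, hjI⟩
        have hjT : j ∈ T := Finset.mem_filter.mpr ⟨Finset.mem_univ _, hjI⟩
        have : j ∈ Set.range f := by rw [Finset.range_orderEmbOfFin]; exact_mod_cast hjT
        obtain ⟨i, rfl⟩ := this
        exact ⟨i, f.le_iff_le.mp hle, rfl⟩
      · rintro ⟨i, hi, rfl⟩
        refine ⟨f.monotone hi, ?_⟩
        have := Finset.orderEmbOfFin_mem T hTcard i
        exact (Finset.mem_filter.mp this).2
    have hWcard : W.card = k := by
      rw [hWeq, Finset.card_image_of_injective _ f.injective, Fin.card_Iic]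
      simp only [hi0]
      omega
    have ht0W : t0 ∈ W := by
      refine Finset.mem_filter.mpr ⟨Finset.mem_univ _, le_refl _, ?_⟩
      exact (Finset.mem_filter.mp ht0T).2
    -- there is a rejected true null at position ≥ t0
    have hexists : ∃ i ∈ S, t0 ≤ σ.symm i := by
      by_contra h
      push_neg at h
      have hsub : S.image σ.symm ⊆ W.erase t0 := by
        intro j hj
        obtain ⟨i, hiS, rfl⟩ := Finset.mem_image.mp hj
        have hlt := h i hiS
        refine Finset.mem_erase.mpr ⟨ne_of_lt hlt, ?_⟩
        refine Finset.mem_filter.mpr ⟨Finset.mem_univ _, le_of_lt hlt, ?_⟩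
        rw [σ.apply_symm_apply]; exact hSI i hiS
      have : S.card ≤ k - 1 := by
        calc S.card = (S.image σ.symm).card :=
              (Finset.card_image_of_injective _ σ.symm.injective).symm
          _ ≤ (W.erase t0).card := Finset.card_le_card hsub
          _ = k - 1 := by rw [Finset.card_erase_of_mem ht0W, hWcard]
      omega
    have ht0D : ∀ j' : Fin m, j' ≤ t0 → p ω (σ j') ≤ a j' := by
      obtain ⟨i, hiS, hle⟩ := hexists
      intro j' hj'
      exact hSD i hiS j' (le_trans hj' hle)
    -- bound the position t0
    have ht0bound : (t0 : ℕ) + 1 ≤ k + (m - ℓ) := by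
      set N := Finset.univ.filter (fun j : Fin m => j ≤ t0 ∧ σ j ∉ I) with hN
      have hNle : N.card ≤ m - ℓ := by
        have hsub : N.image σ ⊆ Iᶜ := by
          intro i hi
          obtain ⟨j, hj, rfl⟩ := Finset.mem_image.mp hi
          simpa using (Finset.mem_filter.mp hj).2.2
        calc N.card = (N.image σ).card :=
              (Finset.card_image_of_injective _ σ.injective).symm
          _ ≤ Iᶜ.card := Finset.card_le_card hsub
          _ = m - ℓ := by rw [Finset.card_compl]; simp [hℓ]
      have hsplit : W.card + N.card = (Finset.univ.filter (fun j : Fin m => j ≤ t0)).card := by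
        rw [hW, hN]
        have h1 : (Finset.univ.filter (fun j : Fin m => j ≤ t0 ∧ σ j ∈ I))
            = (Finset.univ.filter (fun j : Fin m => j ≤ t0)).filter (fun j => σ j ∈ I) := by
          rw [Finset.filter_filter]
        have h2 : (Finset.univ.filter (fun j : Fin m => j ≤ t0 ∧ σ j ∉ I))
            = (Finset.univ.filter (fun j : Fin m => j ≤ t0)).filter (fun j => ¬ (σ j ∈ I)) := by
          rw [Finset.filter_filter]
        rw [h1, h2]
        exact Finset.card_filter_add_card_filter_not _
      have hIic : (Finset.univ.filter (fun j : Fin m => j ≤ t0)).card = (t0 : ℕ) + 1 := by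
        have : Finset.univ.filter (fun j : Fin m => j ≤ t0) = Finset.Iic t0 := by
          ext j; simp
        rw [this, Fin.card_Iic]
      omega
    -- conclude
    have himg : W.image σ ⊆ I.filter (fun i => p ω i ≤ u) := by
      intro i hi
      obtain ⟨j, hjW, rfl⟩ := Finset.mem_image.mp hi
      obtain ⟨_, hjle, hjI⟩ := Finset.mem_filter.mp hjW
      refine Finset.mem_filter.mpr ⟨hjI, ?_⟩
      have h1 : p ω (σ j) ≤ a j := ht0D j hjle
      have h2 : a j ≤ u := by
        rw [ha, hu]
        have hjt : (j : ℕ) ≤ (t0 : ℕ) := hjle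
        split_ifs with hcase
        · exact div_le_div_of_nonneg_left hK.le hℓR (by exact_mod_cast hℓm)
        · have hd : ℓ ≤ m + k - ((j : ℕ) + 1) := by omega
          exact div_le_div_of_nonneg_left hK.le hℓR (by exact_mod_cast hd)
      linarith
    calc k = W.card := hWcard.symm
      _ = (W.image σ).card := (Finset.card_image_of_injective _ σ.injective).symm
      _ ≤ (I.filter fun i => p ω i ≤ u).card := Finset.card_le_card himg
  -- Step B: the probabilistic part
  set A : Fin m → Set Ω := fun i => toMeasurable P {ω | p ω i ≤ u} with hA
  have hAmeas : ∀ i, MeasurableSet (A i) := fun i => measurableSet_toMeasurable _ _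
  set B : Set Ω := ⋃ J ∈ I.powersetCard k, ⋂ i ∈ J, A i with hB
  have hBmeas : MeasurableSet B := by
    refine MeasurableSet.biUnion (Finset.countable_toSet _) fun J _ => ?_
    exact MeasurableSet.biInter (Finset.countable_toSet _) fun i _ => hAmeas i
  have hsubB : {ω | k ≤ (Finset.univ.filter fun i => i ∈ I ∧ rejected ω i).card} ⊆ B := by
    intro ω hω
    have h1 := stepA ω hω
    obtain ⟨J, hJsub, hJcard⟩ := Finset.exists_subset_card_eq h1
    have hJI : J ∈ I.powersetCard k := Finset.mem_powersetCard.mpr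
      ⟨hJsub.trans (Finset.filter_subset _ _), hJcard⟩
    refine Set.mem_biUnion hJI ?_
    refine Set.mem_biInter fun i hi => ?_
    exact subset_toMeasurable _ _ ((Finset.mem_filter.mp (hJsub hi)).2)
  have hmark : (k : ENNReal) * P B ≤ ∑ i ∈ I, P (A i) := by
    have hpt : ∀ ω, B.indicator (fun _ => (k : ENNReal)) ω
        ≤ ∑ i ∈ I, (A i).indicator (fun _ => (1 : ENNReal)) ω := by
      intro ω
      by_cases hω : ω ∈ B
      · rw [Set.indicator_of_mem hω]
        obtain ⟨J, hJ, hωJ⟩ := Set.mem_iUnion₂.mp hω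
        obtain ⟨hJI, hJcard⟩ := Finset.mem_powersetCard.mp hJ
        calc (k : ENNReal) = ∑ _i ∈ J, (1 : ENNReal) := by
              rw [Finset.sum_const, hJcard]; simp
          _ = ∑ i ∈ J, (A i).indicator (fun _ => (1 : ENNReal)) ω := by
              refine Finset.sum_congr rfl fun i hi => ?_
              rw [Set.indicator_of_mem (Set.mem_iInter₂.mp hωJ i hi)]
          _ ≤ ∑ i ∈ I, (A i).indicator (fun _ => (1 : ENNReal)) ω := by
              refine Finset.sum_le_sum_of_subset hJI
      · rw [Set.indicator_of_notMem hω]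
        exact zero_le
    calc (k : ENNReal) * P B
        = ∫⁻ ω, B.indicator (fun _ => (k : ENNReal)) ω ∂P :=
          (lintegral_indicator_const hBmeas _).symm
      _ ≤ ∫⁻ ω, ∑ i ∈ I, (A i).indicator (fun _ => (1 : ENNReal)) ω ∂P := lintegral_mono hpt
      _ = ∑ i ∈ I, ∫⁻ ω, (A i).indicator (fun _ => (1 : ENNReal)) ω ∂P :=
          lintegral_finset_sum _ fun i _ => (measurable_const.indicator (hAmeas i))
      _ = ∑ i ∈ I, P (A i) := by
          refine Finset.sum_congr rfl fun i _ => ?_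
          rw [lintegral_indicator_const (hAmeas i), one_mul]
  have hsum : ∑ i ∈ I, P (A i) ≤ (k : ENNReal) * ENNReal.ofReal α := by
    have h1 : ∑ i ∈ I, P (A i) ≤ ∑ _i ∈ I, ENNReal.ofReal u := by
      refine Finset.sum_le_sum fun i hi => ?_
      rw [hA, measure_toMeasurable]
      exact hsuper i hi u ⟨hu0, hu1⟩
    have h2 : ∑ _i ∈ I, ENNReal.ofReal u = (ℓ : ENNReal) * ENNReal.ofReal u := by
      rw [Finset.sum_const, ← hℓ]; simp [mul_comm]
    have h3 : (ℓ : ENNReal) * ENNReal.ofReal u = (k : ENNReal) * ENNReal.ofReal α := by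
      rw [← ENNReal.ofReal_natCast ℓ, ← ENNReal.ofReal_mul (by positivity),
        ← ENNReal.ofReal_natCast k, ← ENNReal.ofReal_mul (by positivity)]
      congr 1
      rw [hu]
      field_simp
    calc ∑ i ∈ I, P (A i) ≤ ∑ _i ∈ I, ENNReal.ofReal u := h1
      _ = (k : ENNReal) * ENNReal.ofReal α := by rw [h2, h3]
  have hfinal : (k : ENNReal) * P {ω | k ≤ (Finset.univ.filter
      fun i => i ∈ I ∧ rejected ω i).card} ≤ (k : ENNReal) * ENNReal.ofReal α := by
    calc (k : ENNReal) * P {ω | k ≤ (Finset.univ.filter fun i => i ∈ I ∧ rejected ω i).card}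
        ≤ (k : ENNReal) * P B := by
          exact mul_le_mul_right (measure_mono hsubB) _
      _ ≤ ∑ i ∈ I, P (A i) := hmark
      _ ≤ (k : ENNReal) * ENNReal.ofReal α := hsum
  have hk0 : (k : ENNReal) ≠ 0 := by exact_mod_cast Nat.pos_of_ne_zero (by omega) |>.ne'
  exact (ENNReal.mul_le_mul_iff_right hk0 (ENNReal.natCast_ne_top k)).mp hfinal
end

section
/- Let λ_1 ≥ λ_2 ≥ ... ≥ λ_m ≥ 0 and for y ∈ ℝ^m let β̂(y) be the SLOPE estimator, a minimizer of (1/2)‖y − b‖₂² + Σ_{i=1}^m λ_i|b|_(i) over b ∈ ℝ^m, with R(y) = #{i : β̂(y)_i ≠ 0} the number of rejections (hypothesis H_i is rejected iff β̂(y)_i ≠ 0). Then for every index i and every integer r ≥ 1, the event {y : H_i is rejected and R(y) = r} is equal to the event {y : |y_i| > λ_r and R(y) = r}. -/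
open Finset
open scoped Classical

/-- `sortedDesc v i` is the `i`-th largest entry of the tuple `v` (0-indexed). -/
noncomputable def sortedDesc {n : ℕ} (v : Fin n → ℝ) : Fin n → ℝ :=
  fun i => v (Tuple.sort v i.rev)

section Helpers

variable {m : ℕ}

/-- The permutation sorting `w` into nonincreasing order. -/
noncomputable def descPerm (w : Fin m → ℝ) : Equiv.Perm (Fin m) :=
  (Fin.revPerm).trans (Tuple.sort w)

lemma sortedDesc_eq (w : Fin m → ℝ) (j : Fin m) :
    sortedDesc w j = w (descPerm w j) := rfl

lemma sortedDesc_antitone (w : Fin m → ℝ) : Antitone (sortedDesc w) := by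
  intro a b hab
  exact Tuple.monotone_sort w (Fin.rev_le_rev.mpr hab)

lemma card_filter_sortedDesc (w : Fin m → ℝ) (p : ℝ → Prop) [DecidablePred p] :
    (univ.filter fun j => p (sortedDesc w j)).card
      = (univ.filter fun j => p (w j)).card := by
  apply Finset.card_bij (fun j _ => descPerm w j)
  · intro a ha
    simp only [mem_filter, mem_univ, true_and] at *
    exact ha
  · intro a _ b _ h
    exact (descPerm w).injective h
  · intro b hb
    refine ⟨(descPerm w).symm b, ?_, by simp⟩
    simp only [mem_filter, mem_univ, true_and] at *
    simpa [sortedDesc_eq] using hb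

lemma lt_card_of_lt_sortedDesc (w : Fin m → ℝ) {t : ℝ} {k : Fin m}
    (h : t < sortedDesc w k) :
    (k : ℕ) < (univ.filter fun j => t < w j).card := by
  rw [← card_filter_sortedDesc w (fun x => t < x)]
  calc (k : ℕ) < (Finset.Iic k).card := by rw [Fin.card_Iic]; omega
    _ ≤ _ := by
        apply Finset.card_le_card
        intro j hj
        simp only [Finset.mem_Iic] at hj
        simp only [mem_filter, mem_univ, true_and]
        exact lt_of_lt_of_le h (sortedDesc_antitone w hj)

lemma card_le_of_sortedDesc_le (w : Fin m → ℝ) {t : ℝ} {k : Fin m}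
    (h : sortedDesc w k ≤ t) :
    (univ.filter fun j => t < w j).card ≤ (k : ℕ) := by
  rw [← card_filter_sortedDesc w (fun x => t < x)]
  calc (univ.filter fun j => t < sortedDesc w j).card
      ≤ (Finset.Iio k).card := by
        apply Finset.card_le_card
        intro j hj
        simp only [mem_filter, mem_univ, true_and] at hj
        simp only [Finset.mem_Iio]
        by_contra hjk
        push_neg at hjk
        exact absurd (le_trans (sortedDesc_antitone w hjk) h) (not_le.mpr hj)
    _ = (k : ℕ) := Fin.card_Iio k

lemma sum_perm_le (lam w : Fin m → ℝ) (hA : Antitone lam) (e : Equiv.Perm (Fin m)) :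
    ∑ j, lam j * w (e j) ≤ ∑ j, lam j * sortedDesc w j := by
  have hmv : Monovary lam (sortedDesc w) := hA.monovary (sortedDesc_antitone w)
  have h := hmv.sum_smul_comp_perm_le_sum_smul (σ := e.trans (descPerm w).symm)
  simpa [smul_eq_mul, sortedDesc_eq, Equiv.trans_apply] using h

lemma sum_update_perm (lam w : Fin m → ℝ) (τ : Equiv.Perm (Fin m)) (i : Fin m) (c : ℝ) :
    ∑ j, lam j * (Function.update w i c) (τ j)
      = ∑ j, lam j * w (τ j) + lam (τ.symm i) * (c - w i) := by
  have hfe : (fun j => lam j * (Function.update w i c) (τ j))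
      = Function.update (fun j => lam j * w (τ j)) (τ.symm i) (lam (τ.symm i) * c) := by
    funext j
    rcases eq_or_ne j (τ.symm i) with rfl | hj
    · have hτ : τ (τ.symm i) = i := τ.apply_symm_apply i
      rw [hτ]
      simp
    · have hτj : τ j ≠ i := fun h => hj (by simp [← h])
      simp [Function.update_of_ne hτj, Function.update_of_ne hj]
  rw [hfe, Finset.sum_update_of_mem (Finset.mem_univ _)]
  have h2 : ∑ j, lam j * w (τ j)
      = ∑ j ∈ univ \ {τ.symm i}, lam j * w (τ j) + lam (τ.symm i) * w i := by
    have := Finset.sum_eq_sum_sdiff_singleton_add (Finset.mem_univ (τ.symm i))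
      (fun j => lam j * w (τ j))
    simpa using this
  rw [h2]; ring

lemma sum_sq_update (y b : Fin m → ℝ) (i : Fin m) (t : ℝ) :
    ∑ j, (y j - Function.update b i t j) ^ 2
      = ∑ j, (y j - b j) ^ 2 + ((y i - t) ^ 2 - (y i - b i) ^ 2) := by
  have hfe : (fun j => (y j - Function.update b i t j) ^ 2)
      = Function.update (fun j => (y j - b j) ^ 2) i ((y i - t) ^ 2) := by
    funext j
    rcases eq_or_ne j i with rfl | hj
    · simp
    · simp [Function.update_of_ne hj]
  rw [hfe, Finset.sum_update_of_mem (Finset.mem_univ _)]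
  have h2 : ∑ j, (y j - b j) ^ 2
      = ∑ j ∈ univ \ {i}, (y j - b j) ^ 2 + (y i - b i) ^ 2 := by
    have := Finset.sum_eq_sum_sdiff_singleton_add (Finset.mem_univ i)
      (fun j => (y j - b j) ^ 2)
    simpa using this
  rw [h2]; ring

lemma abs_update (b : Fin m → ℝ) (i : Fin m) (t : ℝ) :
    (fun j => |Function.update b i t j|)
      = Function.update (fun j => |b j|) i |t| := by
  funext j
  rcases eq_or_ne j i with rfl | hj
  · simp
  · simp [Function.update_of_ne hj]

end Helpers

/-- **SLOPE rejection event characterization (orthogonal/identity design).**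
For SLOPE applied to data `y ∈ ℝ^m` with nonincreasing nonnegative weights
`λ_1 ≥ ... ≥ λ_m ≥ 0`, hypothesis `H_i` is rejected iff `β̂(y)_i ≠ 0`, and
`R(y)` is the number of rejections. Then for any index `i` and integer `r ≥ 1`,
`{y : H_i rejected and R(y) = r} = {y : |y_i| > λ_r and R(y) = r}`. -/
theorem slope_rejection_event_eq
    (m : ℕ) (lam : Fin m → ℝ)
    (hmono : ∀ i j : Fin m, i ≤ j → lam j ≤ lam i)
    (hnonneg : ∀ i, 0 ≤ lam i)
    (βhat : (Fin m → ℝ) → (Fin m → ℝ))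
    (hmin : ∀ y b : Fin m → ℝ,
      (1 / 2) * ∑ j, (y j - βhat y j) ^ 2
          + ∑ j, lam j * sortedDesc (fun j' => |βhat y j'|) j
        ≤ (1 / 2) * ∑ j, (y j - b j) ^ 2
          + ∑ j, lam j * sortedDesc (fun j' => |b j'|) j)
    (R : (Fin m → ℝ) → ℕ)
    (hR : ∀ y, R y = (Finset.univ.filter fun j => βhat y j ≠ 0).card)
    (i : Fin m) (r : ℕ) (hr1 : 1 ≤ r) (hrm : r ≤ m) :
    {y : Fin m → ℝ | βhat y i ≠ 0 ∧ R y = r}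
      = {y : Fin m → ℝ | lam ⟨r - 1, by omega⟩ < |y i| ∧ R y = r} := by
  have hA : Antitone lam := fun a b hab => hmono a b hab
  have hq : r - 1 < m := by omega
  ext y
  simp only [Set.mem_setOf_eq]
  set w : Fin m → ℝ := fun j' => |βhat y j'| with hw
  have hwnonneg : ∀ j, 0 ≤ w j := fun j => abs_nonneg _
  have hwcard : R y = (univ.filter fun j => (0:ℝ) < w j).card := by
    rw [hR y]
    congr 1
    apply Finset.filter_congr
    intro j _
    simp [hw, abs_pos]
  constructor
  · rintro ⟨hi, hRy⟩
    refine ⟨?_, hRy⟩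
    -- Direction 1: rejection of H_i with R = r implies |y i| > lam_r
    have hwi : (0:ℝ) < w i := abs_pos.mpr hi
    have hcard : (univ.filter fun j => (0:ℝ) < w j).card = r := by
      rw [← hwcard, hRy]
    have habs : (fun j' => |Function.update (βhat y) i 0 j'|)
        = Function.update w i 0 := by
      rw [abs_update]
      simp [hw]
    have hw'nonneg : ∀ j, 0 ≤ Function.update w i 0 j := by
      intro j
      rcases eq_or_ne j i with rfl | hj
      · simp
      · rw [Function.update_of_ne hj]; exact hwnonneg j
    have hw'card : (univ.filter fun j => (0:ℝ) < Function.update w i 0 j).card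
        = r - 1 := by
      have hset : (univ.filter fun j => (0:ℝ) < Function.update w i 0 j)
          = (univ.filter fun j => (0:ℝ) < w j).erase i := by
        ext j
        simp only [mem_filter, mem_univ, true_and, mem_erase]
        rcases eq_or_ne j i with rfl | hj
        · simp
        · rw [Function.update_of_ne hj]
          simp [hj]
      rw [hset, Finset.card_erase_of_mem, hcard]
      simp only [mem_filter, mem_univ, true_and]
      exact hwi
    have hsd0 : sortedDesc (Function.update w i 0) (⟨r-1, hq⟩ : Fin m) = 0 := by
      by_contra h0
      have hpos : 0 < sortedDesc (Function.update w i 0) (⟨r-1, hq⟩ : Fin m) := by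
        refine lt_of_le_of_ne ?_ (Ne.symm h0)
        rw [sortedDesc_eq]
        exact hw'nonneg _
      have hlt := lt_card_of_lt_sortedDesc (Function.update w i 0) hpos
      rw [hw'card] at hlt
      have hqv : ((⟨r-1, hq⟩ : Fin m) : ℕ) = r - 1 := rfl
      omega
    set π' := descPerm (Function.update w i 0) with hπ'
    have hπq : Function.update w i 0 (π' (⟨r-1, hq⟩ : Fin m)) = 0 := by
      have h := hsd0
      rw [sortedDesc_eq, ← hπ'] at h
      exact h
    have hπk : Function.update w i 0 (π' (π'.symm i)) = 0 := by
      rw [Equiv.apply_symm_apply]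
      simp
    set τ : Equiv.Perm (Fin m) := (Equiv.swap (⟨r-1, hq⟩ : Fin m) (π'.symm i)).trans π'
      with hτdef
    have hτq : τ (⟨r-1, hq⟩ : Fin m) = i := by
      rw [hτdef]
      simp [Equiv.trans_apply, Equiv.swap_apply_left]
    have hτsymm : τ.symm i = (⟨r-1, hq⟩ : Fin m) := by
      rw [← hτq, Equiv.symm_apply_apply]
    have hsum_eq : ∑ j, lam j * Function.update w i 0 (τ j)
        = ∑ j, lam j * sortedDesc (Function.update w i 0) j := by
      apply Finset.sum_congr rfl
      intro j _
      congr 1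
      rw [sortedDesc_eq, ← hπ']
      rcases eq_or_ne j (⟨r-1, hq⟩ : Fin m) with rfl | hjq
      · rw [hτq, hπq]
        simp
      · rcases eq_or_ne j (π'.symm i) with rfl | hjk
        · have ht : τ (π'.symm i) = π' (⟨r-1, hq⟩ : Fin m) := by
            rw [hτdef]
            simp [Equiv.trans_apply, Equiv.swap_apply_right]
          rw [ht, hπq, hπk]
        · have ht : τ j = π' j := by
            rw [hτdef]
            rw [Equiv.trans_apply, Equiv.swap_apply_of_ne_of_ne hjq hjk]
          rw [ht]
    have hkey : ∑ j, lam j * sortedDesc (Function.update w i 0) j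
        + lam (⟨r-1, hq⟩ : Fin m) * w i
        ≤ ∑ j, lam j * sortedDesc w j := by
      have h1 := sum_perm_le lam w hA τ
      have h2 := sum_update_perm lam (Function.update w i 0) τ i (w i)
      rw [hτsymm] at h2
      have hupd : Function.update (Function.update w i 0) i (w i) = w := by
        rw [Function.update_idem]
        exact Function.update_eq_self i w
      rw [hupd, hsum_eq] at h2
      have hz : Function.update w i 0 i = 0 := by simp
      rw [hz] at h2
      rw [h2] at h1
      linarith
    have hmin' := hmin y (Function.update (βhat y) i 0)
    rw [habs, ← hw, sum_sq_update y (βhat y) i 0] at hmin'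
    -- conclude
    have hb2 : 0 < βhat y i ^ 2 := by
      have := sq_nonneg (βhat y i)
      rcases lt_or_eq_of_le this with h | h
      · exact h
      · exact absurd (pow_eq_zero_iff (n := 2) (by norm_num) |>.mp h.symm) hi
    have hyb : y i * βhat y i ≤ |y i| * |βhat y i| := by
      calc y i * βhat y i ≤ |y i * βhat y i| := le_abs_self _
        _ = |y i| * |βhat y i| := abs_mul _ _
    have hwiabs : w i = |βhat y i| := rfl
    have hfin : lam (⟨r-1, hq⟩ : Fin m) * |βhat y i| < |y i| * |βhat y i| := by
      rw [← hwiabs]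
      nlinarith [hkey, hmin', hyb, hb2]
    exact lt_of_mul_lt_mul_right hfin (abs_nonneg _)
  · rintro ⟨h1, hRy⟩
    refine ⟨?_, hRy⟩
    by_contra hβ
    have h1' : lam (⟨r-1, hq⟩ : Fin m) < |y i| := h1
    have hwi : w i = 0 := by simp [hw, hβ]
    have hcard : (univ.filter fun j => (0:ℝ) < w j).card = r := by
      rw [← hwcard, hRy]
    have hS : (univ.filter fun j => (0:ℝ) < w j).Nonempty := by
      rw [← Finset.card_pos, hcard]; omega
    set μ := (univ.filter fun j => (0:ℝ) < w j).inf' hS w with hμ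
    have hμpos : 0 < μ := by
      rw [hμ, Finset.lt_inf'_iff]
      intro j hj
      exact (mem_filter.mp hj).2
    have hd : 0 < |y i| - lam (⟨r-1, hq⟩ : Fin m) := by linarith
    set ε := min (μ/2) (|y i| - lam (⟨r-1, hq⟩ : Fin m)) with hε
    have hεpos : 0 < ε := lt_min (by linarith) hd
    have hεlt : ∀ j, (0:ℝ) < w j → ε < w j := by
      intro j hj
      have hj' : j ∈ univ.filter fun j => (0:ℝ) < w j :=
        mem_filter.mpr ⟨mem_univ _, hj⟩
      calc ε ≤ μ/2 := min_le_left _ _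
        _ < μ := by linarith
        _ ≤ w j := Finset.inf'_le w hj'
    have hεd : ε ≤ |y i| - lam (⟨r-1, hq⟩ : Fin m) := min_le_right _ _
    set t := if 0 ≤ y i then ε else -ε with ht
    have habst : |t| = ε := by
      rcases le_or_gt 0 (y i) with h | h
      · rw [ht, if_pos h]; exact abs_of_pos hεpos
      · rw [ht, if_neg (not_le.mpr h), abs_neg]; exact abs_of_pos hεpos
    have hyt : y i * t = ε * |y i| := by
      rcases le_or_gt 0 (y i) with h | h
      · rw [ht, if_pos h, abs_of_nonneg h]; ring
      · rw [ht, if_neg (not_le.mpr h), abs_of_neg h]; ring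
    have habs : (fun j' => |Function.update (βhat y) i t j'|)
        = Function.update w i ε := by
      rw [abs_update, habst]
    set π'' := descPerm (Function.update w i ε) with hπ''
    have hsdk : sortedDesc (Function.update w i ε) (π''.symm i) = ε := by
      rw [sortedDesc_eq, ← hπ'', Equiv.apply_symm_apply]
      simp
    have hcard' : (univ.filter fun j => ε < Function.update w i ε j).card = r := by
      have hset : (univ.filter fun j => ε < Function.update w i ε j)
          = (univ.filter fun j => (0:ℝ) < w j) := by
        ext j
        simp only [mem_filter, mem_univ, true_and]
        rcases eq_or_ne j i with rfl | hj
        · simp [hwi]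
        · rw [Function.update_of_ne hj]
          constructor
          · intro h; linarith
          · intro h; exact hεlt j h
      rw [hset, hcard]
    have hrk : r ≤ ((π''.symm i : Fin m) : ℕ) := by
      have hle := card_le_of_sortedDesc_le (Function.update w i ε) (le_of_eq hsdk)
      rwa [hcard'] at hle
    have hlamk : lam (π''.symm i) ≤ lam (⟨r-1, hq⟩ : Fin m) := by
      apply hmono
      rw [Fin.le_def]
      have hqv : ((⟨r-1, hq⟩ : Fin m) : ℕ) = r - 1 := rfl
      omega
    have hPle : ∑ j, lam j * sortedDesc (Function.update w i ε) j
        ≤ ∑ j, lam j * sortedDesc w j + lam (π''.symm i) * ε := by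
      have h3 : ∑ j, lam j * sortedDesc (Function.update w i ε) j
          = ∑ j, lam j * Function.update w i ε (π'' j) :=
        Finset.sum_congr rfl (fun j _ => by rw [sortedDesc_eq, ← hπ''])
      have h2 := sum_update_perm lam w π'' i ε
      rw [hwi] at h2
      have h4 := sum_perm_le lam w hA π''
      rw [h3, h2]
      linarith
    have hmin' := hmin y (Function.update (βhat y) i t)
    rw [habs, ← hw, sum_sq_update y (βhat y) i t, hβ] at hmin'
    have ht2 : t^2 = ε^2 := by rw [← sq_abs t, habst]
    have hq2 : (y i - t)^2 - (y i - 0)^2 = ε^2 - 2*(ε*|y i|) := by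
      have hr2 : (y i - t)^2 - (y i - 0)^2 = t^2 - 2*(y i * t) := by ring
      rw [hr2, ht2, hyt]
    nlinarith [hmin', hPle, hq2, mul_le_mul_of_nonneg_left hεd hεpos.le,
      mul_le_mul_of_nonneg_right hlamk hεpos.le, hεpos, sq_nonneg ε]
end

section
/- Let λ_1 ≥ λ_2 ≥ ... ≥ λ_m ≥ 0 and for y ∈ ℝ^m let R(y) be the number of nonzero entries of the SLOPE estimator minimizing (1/2)‖y − b‖₂² + Σ_{j=1}^m λ_j|b|_(j). Fix an index i, and for y ∈ ℝ^m let ỹ = (y_1,...,y_{i−1},y_{i+1},...,y_m) ∈ ℝ^{m−1}; let R̃(ỹ) be the number of nonzero entries of the SLOPE estimator applied to ỹ with weight sequence (λ_2,...,λ_m). Then for every integer r > 1, the event {y : |y_i| > λ_r and R(y) = r} is contained in the event {y : |y_i| > λ_r and R̃(ỹ) = r − 1}. -/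
open Finset
open scoped Classical

lemma sortedDesc_antitone_s6 {n : ℕ} (v : Fin n → ℝ) : Antitone (sortedDesc v) := by
  intro a b hab
  exact Tuple.monotone_sort v (Fin.rev_le_rev.mpr hab)

lemma comp_perm_eq_sortedDesc {n : ℕ} (v : Fin n → ℝ) (σ : Equiv.Perm (Fin n))
    (h : Antitone (v ∘ σ)) : v ∘ σ = sortedDesc v := by
  have hm : Monotone (v ∘ (Fin.revPerm.trans σ)) := by
    intro a b hab
    exact h (Fin.rev_le_rev.mpr hab)
  have := Tuple.unique_monotone hm (Tuple.monotone_sort v)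
  funext i
  have h2 := congrFun this i.rev
  simpa [Fin.rev_rev, sortedDesc] using h2

lemma sortedDesc_comp_perm {n : ℕ} (v : Fin n → ℝ) (σ : Equiv.Perm (Fin n)) :
    sortedDesc (v ∘ σ) = sortedDesc v := by
  funext i
  have := Tuple.comp_perm_comp_sort_eq_comp_sort (σ := σ) (f := v)
  calc sortedDesc (v ∘ σ) i = ((v ∘ σ) ∘ Tuple.sort (v ∘ σ)) i.rev := rfl
    _ = (v ∘ Tuple.sort v) i.rev := by rw [this]
    _ = sortedDesc v i := rfl

lemma sortedDesc_of_antitone {n : ℕ} (v : Fin n → ℝ) (h : Antitone v) :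
    sortedDesc v = v := by
  have := comp_perm_eq_sortedDesc v (Equiv.refl _) (by simpa using h)
  simpa using this.symm

lemma exists_sortPerm {n : ℕ} (v : Fin n → ℝ) :
    ∃ σ : Equiv.Perm (Fin n), v ∘ σ = sortedDesc v :=
  ⟨Fin.revPerm.trans (Tuple.sort v), rfl⟩

/-- rearrangement: pairing `μ` (antitone) with any rearrangement of `w`
is at most pairing with the descending sort of `w`. -/
lemma rearrange_le {n : ℕ} (μ : Fin n → ℝ) (hμ : Antitone μ)
    (w : Fin n → ℝ) (σ : Equiv.Perm (Fin n)) :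
    ∑ j, μ j * w (σ j) ≤ ∑ j, μ j * sortedDesc w j := by
  obtain ⟨π, hπ⟩ := exists_sortPerm w
  have hmono : Monovary μ (sortedDesc w) := by
    intro a b hab
    rcases le_or_gt b a with h | h
    · exact hμ h
    · exact absurd (sortedDesc_antitone_s6 w h.le) (not_le.mpr hab)
  have key := hmono.sum_smul_comp_perm_le_sum_smul (σ := σ.trans π.symm)
  have h1 : ∀ j, w (σ j) = sortedDesc w ((σ.trans π.symm) j) := by
    intro j
    have := congrFun hπ (π.symm (σ j))
    simp only [Function.comp_apply, Equiv.apply_symm_apply] at this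
    simp only [Equiv.trans_apply]
    exact this
  calc ∑ j, μ j * w (σ j) = ∑ j, μ j • sortedDesc w ((σ.trans π.symm) j) := by
        simp only [smul_eq_mul]; exact Finset.sum_congr rfl fun j _ => by rw [h1 j]
    _ ≤ ∑ j, μ j • sortedDesc w j := key
    _ = ∑ j, μ j * sortedDesc w j := by simp [smul_eq_mul]

/-- monotonicity of the sorted-weighted penalty in componentwise absolute value -/
lemma penalty_mono {n : ℕ} (μ : Fin n → ℝ) (hμ : Antitone μ) (hμ0 : ∀ j, 0 ≤ μ j)
    (b b' : Fin n → ℝ) (h : ∀ j, |b' j| ≤ |b j|) :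
    ∑ j, μ j * sortedDesc (fun j' => |b' j'|) j ≤ ∑ j, μ j * sortedDesc (fun j' => |b j'|) j := by
  obtain ⟨σ, hσ⟩ := exists_sortPerm (fun j' => |b' j'|)
  calc ∑ j, μ j * sortedDesc (fun j' => |b' j'|) j
      = ∑ j, μ j * |b' (σ j)| := Finset.sum_congr rfl fun j _ => by rw [← congrFun hσ j]; rfl
    _ ≤ ∑ j, μ j * |b (σ j)| :=
        Finset.sum_le_sum fun j _ => mul_le_mul_of_nonneg_left (h (σ j)) (hμ0 j)
    _ ≤ ∑ j, μ j * sortedDesc (fun j' => |b j'|) j := rearrange_le μ hμ (fun j' => |b j'|) σ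

/-- pad a finite tuple by zeros -/
noncomputable def pad {n : ℕ} (v : Fin n → ℝ) : ℕ → ℝ :=
  fun l => if h : l < n then v ⟨l, h⟩ else 0

lemma pad_lt {n : ℕ} (v : Fin n → ℝ) {l : ℕ} (h : l < n) : pad v l = v ⟨l, h⟩ := dif_pos h

lemma pad_ge {n : ℕ} (v : Fin n → ℝ) {l : ℕ} (h : n ≤ l) : pad v l = 0 := dif_neg (not_lt.mpr h)

lemma pad_antitone {n : ℕ} (v : Fin n → ℝ) (hv : Antitone v) (hv0 : ∀ j, 0 ≤ v j) :
    ∀ a b : ℕ, a ≤ b → pad v b ≤ pad v a := by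
  intro a b hab
  by_cases hb : b < n
  · have ha : a < n := lt_of_le_of_lt hab hb
    rw [pad_lt v hb, pad_lt v ha]
    exact hv (by exact_mod_cast hab)
  · rw [pad_ge v (not_lt.mp hb)]
    by_cases ha : a < n
    · rw [pad_lt v ha]; exact hv0 _
    · rw [pad_ge v (not_lt.mp ha)]

lemma pad_nonneg {n : ℕ} (v : Fin n → ℝ) (hv0 : ∀ j, 0 ≤ v j) : ∀ l, 0 ≤ pad v l := by
  intro l
  by_cases h : l < n
  · rw [pad_lt v h]; exact hv0 _
  · rw [pad_ge v (not_lt.mp h)]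

/-- sum over a Fin-filter equals a padded ℕ-sum -/
lemma sum_filter_eq_sum_ico {n : ℕ} (w : Fin n → ℝ) (a b : ℕ) (hb : b ≤ n) :
    ∑ l ∈ Finset.univ.filter (fun l : Fin n => a ≤ l.val ∧ l.val < b), w l
      = ∑ l ∈ Finset.Ico a b, pad w l := by
  symm
  apply Finset.sum_bij (i := fun (l : ℕ) (hl : l ∈ Finset.Ico a b) =>
    (⟨l, lt_of_lt_of_le (Finset.mem_Ico.mp hl).2 hb⟩ : Fin n))
  · intro l hl
    rw [Finset.mem_Ico] at hl
    simp only [Finset.mem_filter, Finset.mem_univ, true_and]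
    exact hl
  · intro l1 h1 l2 h2 heq
    simpa using congrArg Fin.val heq
  · intro l hl
    simp only [Finset.mem_filter, Finset.mem_univ, true_and] at hl
    exact ⟨l.val, Finset.mem_Ico.mpr hl, by simp⟩
  · intro l hl
    rw [Finset.mem_Ico] at hl
    exact pad_lt w _

lemma eps_limit (A C ε0 : ℝ) (hε0 : 0 < ε0)
    (h : ∀ ε : ℝ, 0 < ε → ε ≤ ε0 → 0 ≤ ε * A + ε ^ 2 * C) : 0 ≤ A := by
  by_contra hA
  push_neg at hA
  set ε : ℝ := min ε0 (-A / (2 * (|C| + 1))) with hε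
  have hC1 : 0 < |C| + 1 := by positivity
  have hεpos : 0 < ε := lt_min hε0 (div_pos (neg_pos.mpr hA) (by positivity))
  have h1 := h ε hεpos (min_le_left _ _)
  have h2 : ε ≤ -A / (2 * (|C| + 1)) := min_le_right _ _
  have h3 : ε * C ≤ ε * |C| := mul_le_mul_of_nonneg_left (le_abs_self C) hεpos.le
  have h4 : ε * |C| ≤ -A / 2 := by
    have h41 : ε * |C| ≤ (-A / (2 * (|C| + 1))) * |C| :=
      mul_le_mul_of_nonneg_right h2 (abs_nonneg C)
    have h42 : (-A / (2 * (|C| + 1))) * |C| ≤ -A / 2 := by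
      rw [div_mul_eq_mul_div, div_le_div_iff₀ (by positivity) (by norm_num)]
      nlinarith [abs_nonneg C, neg_pos.mpr hA]
    linarith
  have h5 : 0 ≤ A + ε * C := by
    by_contra hneg
    push_neg at hneg
    nlinarith [mul_neg_of_pos_of_neg hεpos hneg]
  linarith

-- helpers for sign manipulation
lemma abs_sign_mul (x t : ℝ) (hx : x ≠ 0) : |Real.sign x * t| = |t| := by
  rcases hx.lt_or_gt with h | h
  · rw [Real.sign_of_neg h]; rw [abs_mul]; norm_num
  · rw [Real.sign_of_pos h]; rw [abs_mul]; norm_num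

lemma sign_mul_quad (x t : ℝ) (hx : x ≠ 0) : (x - Real.sign x * t)^2 = (|x| - t)^2 := by
  rcases hx.lt_or_gt with h | h
  · rw [Real.sign_of_neg h, abs_of_neg h]; ring
  · rw [Real.sign_of_pos h, abs_of_pos h]; ring

lemma sum_diff_localized {n : ℕ} (σ : Equiv.Perm (Fin n)) (f g : Fin n → ℝ) (K : Finset (Fin n))
    (h : ∀ l, l ∉ K → f (σ l) = g (σ l)) :
    ∑ j, f j = ∑ j, g j + ∑ l ∈ K, (f (σ l) - g (σ l)) := by
  have h1 : ∑ j, (f j - g j) = ∑ l, (f (σ l) - g (σ l)) :=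
    (Equiv.sum_comp σ (fun j => f j - g j)).symm
  have h2 : ∑ l ∈ K, (f (σ l) - g (σ l)) = ∑ l ∈ univ, (f (σ l) - g (σ l)) :=
    Finset.sum_subset (Finset.subset_univ K) (fun l _ hl => by rw [h l hl]; ring)
  have h3 : ∑ j, (f j - g j) = ∑ j, f j - ∑ j, g j := Finset.sum_sub_distrib _ _
  rw [h2, ← h1] at *
  linarith [h3]

lemma card_filter_range {n : ℕ} (a b : ℕ) (hb : b ≤ n) :
    (Finset.univ.filter (fun l : Fin n => a ≤ l.val ∧ l.val < b)).card = b - a := by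
  rw [← Nat.card_Ico a b]
  symm
  apply Finset.card_bij (i := fun (l : ℕ) (hl : l ∈ Finset.Ico a b) =>
    (⟨l, lt_of_lt_of_le (Finset.mem_Ico.mp hl).2 hb⟩ : Fin n))
  · intro l hl
    rw [Finset.mem_Ico] at hl
    simp only [Finset.mem_filter, Finset.mem_univ, true_and]
    exact hl
  · intro l1 h1 l2 h2 heq
    simpa using congrArg Fin.val heq
  · intro l hl
    simp only [Finset.mem_filter, Finset.mem_univ, true_and] at hl
    exact ⟨l.val, Finset.mem_Ico.mpr hl, by simp⟩

set_option maxHeartbeats 2000000 in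
theorem slope_generic (n : ℕ) (μ z β : Fin n → ℝ)
    (hμa : Antitone μ) (hμ0 : ∀ j, 0 ≤ μ j)
    (hmin : ∀ b : Fin n → ℝ,
      (1 / 2) * ∑ j, (z j - β j) ^ 2 + ∑ j, μ j * sortedDesc (fun j' => |β j'|) j
        ≤ (1 / 2) * ∑ j, (z j - b j) ^ 2 + ∑ j, μ j * sortedDesc (fun j' => |b j'|) j) :
    (∀ k, k < (Finset.univ.filter fun j => β j ≠ 0).card →
       0 < ∑ l ∈ Finset.Ico k ((Finset.univ.filter fun j => β j ≠ 0).card),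
           (pad (sortedDesc fun j => |z j|) l - pad μ l)) ∧
    (∀ j, (Finset.univ.filter fun j => β j ≠ 0).card < j → j ≤ n →
       ∃ k, (Finset.univ.filter fun j => β j ≠ 0).card ≤ k ∧ k < j ∧
         ∑ l ∈ Finset.Ico k j, (pad (sortedDesc fun j => |z j|) l - pad μ l) ≤ 0) := by
  classical
  set s : ℕ := (Finset.univ.filter fun j => β j ≠ 0).card with hsdef
  have hsn : s ≤ n := by
    rw [hsdef]
    calc (Finset.univ.filter fun j => β j ≠ 0).card ≤ (Finset.univ : Finset (Fin n)).card :=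
          Finset.card_filter_le _ _
      _ = n := by simp
  -- alignment
  have hAL : ∀ j, (0 ≤ β j ∧ β j ≤ z j) ∨ (z j ≤ β j ∧ β j ≤ 0) := by
    intro j0
    by_contra hno
    have key : ∃ c, |c| ≤ |β j0| ∧ (z j0 - c) ^ 2 < (z j0 - β j0) ^ 2 := by
      rcases le_or_gt 0 (z j0) with hz | hz
      · rcases lt_or_ge (β j0) 0 with hb | hb
        · exact ⟨0, by simpa using abs_nonneg (β j0), by nlinarith⟩
        · rcases le_or_gt (β j0) (z j0) with hbz | hbz
          · exact absurd (Or.inl ⟨hb, hbz⟩) hno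
          · refine ⟨z j0, ?_, by nlinarith⟩
            rw [abs_of_nonneg hz, abs_of_nonneg hb]; linarith
      · rcases lt_or_ge 0 (β j0) with hb | hb
        · exact ⟨0, by simpa using abs_nonneg (β j0), by nlinarith⟩
        · rcases le_or_gt (z j0) (β j0) with hbz | hbz
          · exact absurd (Or.inr ⟨hbz, hb⟩) hno
          · refine ⟨z j0, ?_, by nlinarith⟩
            rw [abs_of_nonpos hz.le, abs_of_nonpos hb]; linarith
    obtain ⟨c, habs, hquad⟩ := key
    have hpen := penalty_mono μ hμa hμ0 β (Function.update β j0 c) (fun j => by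
      by_cases h : j = j0
      · subst h; simpa using habs
      · simp [Function.update_of_ne h])
    have hq : ∑ j, (z j - Function.update β j0 c j) ^ 2 < ∑ j, (z j - β j) ^ 2 := by
      apply Finset.sum_lt_sum
      · intro j _
        by_cases h : j = j0
        · subst h; simp only [Function.update_self]; exact hquad.le
        · simp [Function.update_of_ne h]
      · exact ⟨j0, Finset.mem_univ _, by simp only [Function.update_self]; exact hquad⟩
    have := hmin (Function.update β j0 c)
    linarith
  have hALquad : ∀ j, (z j - β j) ^ 2 = (|z j| - |β j|) ^ 2 := by
    intro j
    rcases hAL j with ⟨h1, h2⟩ | ⟨h1, h2⟩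
    · rw [abs_of_nonneg (le_trans h1 h2), abs_of_nonneg h1]
    · rw [abs_of_nonpos (le_trans h1 h2), abs_of_nonpos h2]; ring
  -- monovariance of |β| with |z|
  have hMV : ∀ a b : Fin n, |z b| < |z a| → |β b| ≤ |β a| := by
    intro a b hzab
    by_contra hba
    push_neg at hba
    have hab : a ≠ b := fun h => by rw [h] at hzab; exact lt_irrefl _ hzab
    by_cases hzb0 : z b = 0
    · have : β b = 0 := by
        rcases hAL b with ⟨h1, h2⟩ | ⟨h1, h2⟩ <;> rw [hzb0] at * <;> linarith
      rw [this] at hba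
      simp at hba
      exact absurd (lt_of_le_of_lt (abs_nonneg _) hba) (lt_irrefl _)
    have hza0 : z a ≠ 0 := by
      intro h
      rw [h] at hzab
      simp at hzab
      exact hzb0 (abs_eq_zero.mp (le_antisymm hzab.le (abs_nonneg _)) )
    set b' := Function.update (Function.update β a (Real.sign (z a) * |β b|)) b
      (Real.sign (z b) * |β a|) with hb'
    have hb'a : b' a = Real.sign (z a) * |β b| := by
      rw [hb', Function.update_of_ne hab, Function.update_self]
    have hb'b : b' b = Real.sign (z b) * |β a| := by rw [hb', Function.update_self]
    have hb'o : ∀ j, j ≠ a → j ≠ b → b' j = β j := by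
      intro j h1 h2
      rw [hb', Function.update_of_ne h2, Function.update_of_ne h1]
    -- penalty equal
    have habsperm : (fun j => |b' j|) = (fun j => |β j|) ∘ (Equiv.swap a b) := by
      funext j
      by_cases h1 : j = a
      · subst h1
        simp only [Function.comp_apply, Equiv.swap_apply_left]
        rw [hb'a, abs_sign_mul _ _ hza0, abs_abs]
      by_cases h2 : j = b
      · subst h2
        simp only [Function.comp_apply, Equiv.swap_apply_right]
        rw [hb'b, abs_sign_mul _ _ hzb0, abs_abs]
      · simp only [Function.comp_apply, Equiv.swap_apply_of_ne_of_ne h1 h2]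
        rw [hb'o j h1 h2]
    have hpen : ∑ j, μ j * sortedDesc (fun j' => |b' j'|) j
        = ∑ j, μ j * sortedDesc (fun j' => |β j'|) j := by
      have := sortedDesc_comp_perm (fun j => |β j|) (Equiv.swap a b)
      rw [show (fun j' => |b' j'|) = (fun j => |β j|) ∘ (Equiv.swap a b) from habsperm, this]
    -- quadratic strictly smaller
    have hquad : ∑ j, (z j - b' j) ^ 2 < ∑ j, (z j - β j) ^ 2 := by
      have hsplit : ∑ j, ((z j - b' j) ^ 2 - (z j - β j) ^ 2)
          = ∑ j ∈ ({a, b} : Finset (Fin n)), ((z j - b' j) ^ 2 - (z j - β j) ^ 2) := by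
        symm
        apply Finset.sum_subset (Finset.subset_univ _)
        intro j _ hj
        simp only [Finset.mem_insert, Finset.mem_singleton] at hj
        push_neg at hj
        rw [hb'o j hj.1 hj.2]
        ring
      have hpair : ∑ j ∈ ({a, b} : Finset (Fin n)), ((z j - b' j) ^ 2 - (z j - β j) ^ 2)
          = ((z a - b' a) ^ 2 - (z a - β a) ^ 2) + ((z b - b' b) ^ 2 - (z b - β b) ^ 2) :=
        Finset.sum_pair hab
      have e1 : (z a - b' a) ^ 2 = (|z a| - |β b|) ^ 2 := by
        rw [hb'a, sign_mul_quad _ _ hza0]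
      have e2 : (z b - b' b) ^ 2 = (|z b| - |β a|) ^ 2 := by
        rw [hb'b, sign_mul_quad _ _ hzb0]
      have e3 := hALquad a
      have e4 := hALquad b
      have hneg : ((z a - b' a) ^ 2 - (z a - β a) ^ 2) + ((z b - b' b) ^ 2 - (z b - β b) ^ 2) < 0 := by
        rw [e1, e2, e3, e4]
        nlinarith
      have hdistr : ∑ j, ((z j - b' j) ^ 2 - (z j - β j) ^ 2)
          = ∑ j, (z j - b' j) ^ 2 - ∑ j, (z j - β j) ^ 2 := Finset.sum_sub_distrib _ _
      rw [hsplit, hpair] at hdistr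
      linarith
    have := hmin b'
    linarith
  -- simultaneous sorting permutation
  obtain ⟨σ, hσz, hσβ⟩ : ∃ σ : Equiv.Perm (Fin n),
      ((fun j => |z j|) ∘ σ = sortedDesc (fun j => |z j|)) ∧
      ((fun j => |β j|) ∘ σ = sortedDesc (fun j => |β j|)) := by
    set F : Fin n → ℝ ×ₗ ℝ := fun j => toLex (|z j|, |β j|) with hF
    set σ : Equiv.Perm (Fin n) := Fin.revPerm.trans (Tuple.sort F) with hσ
    have hFanti : Antitone (F ∘ σ) := by
      intro a b hab
      exact Tuple.monotone_sort F (Fin.rev_le_rev.mpr hab)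
    have hz : Antitone ((fun j => |z j|) ∘ σ) := by
      intro a b hab
      have h := hFanti hab
      simp only [hF, Function.comp_apply] at h
      rw [Prod.Lex.le_iff] at h
      rcases h with h | ⟨h1, _⟩
      · exact le_of_lt h
      · exact le_of_eq h1
    have hβa : Antitone ((fun j => |β j|) ∘ σ) := by
      intro a b hab
      have h := hFanti hab
      simp only [hF, Function.comp_apply] at h
      rw [Prod.Lex.le_iff] at h
      rcases h with h | ⟨_, h2⟩
      · exact hMV _ _ h
      · exact h2
    exact ⟨σ, comp_perm_eq_sortedDesc _ σ hz, comp_perm_eq_sortedDesc _ σ hβa⟩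
  set u : Fin n → ℝ := sortedDesc (fun j => |z j|) with hudef
  set v : Fin n → ℝ := sortedDesc (fun j => |β j|) with hvdef
  have hu : ∀ l, |z (σ l)| = u l := fun l => congrFun hσz l
  have hv : ∀ l, |β (σ l)| = v l := fun l => congrFun hσβ l
  have hvanti : Antitone v := sortedDesc_antitone_s6 _
  have huanti : Antitone u := sortedDesc_antitone_s6 _
  have hv0 : ∀ l, 0 ≤ v l := fun l => (hv l) ▸ abs_nonneg _
  have hu0 : ∀ l, 0 ≤ u l := fun l => (hu l) ▸ abs_nonneg _
  -- support characterization
  have hcard : s = (Finset.univ.filter fun l => v l ≠ 0).card := by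
    rw [hsdef]
    apply Finset.card_bij (i := fun j _ => σ.symm j)
    · intro j hj
      simp only [Finset.mem_filter, Finset.mem_univ, true_and] at hj ⊢
      intro h
      apply hj
      have := hv (σ.symm j)
      rw [Equiv.apply_symm_apply] at this
      rw [h] at this
      exact abs_eq_zero.mp this
    · intro j1 _ j2 _ h
      exact σ.symm.injective h
    · intro l hl
      simp only [Finset.mem_filter, Finset.mem_univ, true_and] at hl
      refine ⟨σ l, ?_, by simp⟩
      simp only [Finset.mem_filter, Finset.mem_univ, true_and]
      intro h
      apply hl
      rw [← hv l, h, abs_zero]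
  have hSUPP : ∀ l : Fin n, (v l ≠ 0 ↔ l.val < s) := by
    intro l
    constructor
    · intro hl
      have hpos : 0 < v l := lt_of_le_of_ne (hv0 l) (Ne.symm hl)
      have hsub : (Finset.univ.filter (fun l' : Fin n => 0 ≤ l'.val ∧ l'.val < l.val + 1))
          ⊆ (Finset.univ.filter fun l' => v l' ≠ 0) := by
        intro l' hl'
        simp only [Finset.mem_filter, Finset.mem_univ, true_and] at hl' ⊢
        have : l' ≤ l := by
          have := hl'.2
          exact Fin.le_def.mpr (by omega)
        have := hvanti this
        intro h0
        rw [h0] at this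
        linarith
      have hcard1 := Finset.card_le_card hsub
      rw [card_filter_range 0 (l.val + 1) l.isLt] at hcard1
      rw [hcard]
      omega
    · intro hl
      by_contra h0
      have hv1 : v l = 0 := h0
      have hsub : (Finset.univ.filter fun l' => v l' ≠ 0)
          ⊆ (Finset.univ.filter (fun l' : Fin n => 0 ≤ l'.val ∧ l'.val < l.val)) := by
        intro l' hl'
        simp only [Finset.mem_filter, Finset.mem_univ, true_and] at hl' ⊢
        refine ⟨Nat.zero_le _, ?_⟩
        by_contra hge
        push_neg at hge
        have : l ≤ l' := Fin.le_def.mpr hge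
        have := hvanti this
        rw [hv1] at this
        exact hl' (le_antisymm this (hv0 l'))
      have hcard1 := Finset.card_le_card hsub
      rw [card_filter_range 0 l.val (le_of_lt l.isLt)] at hcard1
      rw [hcard] at hl
      omega
  constructor
  · -- G1 : positivity of trailing sums up to s
    intro k hk
    have hs1 : s - 1 < n := by omega
    have hε0pos : 0 < v ⟨s - 1, hs1⟩ := by
      have h := (hSUPP ⟨s - 1, hs1⟩).mpr (by simp; omega)
      exact lt_of_le_of_ne (hv0 _) (Ne.symm h)
    set ε0 : ℝ := v ⟨s - 1, hs1⟩ with hε0def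
    set K : Finset (Fin n) := Finset.univ.filter (fun l : Fin n => k ≤ l.val ∧ l.val < s)
      with hKdef
    have hvK : ∀ l ∈ K, ε0 ≤ v l := by
      intro l hl
      simp only [hKdef, Finset.mem_filter, Finset.mem_univ, true_and] at hl
      apply hvanti
      exact Fin.le_def.mpr (by simp; omega)
    have hvKpos : ∀ l ∈ K, 0 < v l := fun l hl => lt_of_lt_of_le hε0pos (hvK l hl)
    have hkey : ∀ ε : ℝ, 0 < ε → ε ≤ ε0 →
        0 ≤ ε * (∑ l ∈ K, (u l - v l - μ l)) + ε ^ 2 * (K.card * (1 / 2)) := by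
      intro ε hε1 hε2
      set b : Fin n → ℝ := fun j' =>
        if k ≤ (σ.symm j').val ∧ (σ.symm j').val < s then β j' - ε * Real.sign (β j')
        else β j' with hbdef
      set v' : Fin n → ℝ := fun l => if k ≤ l.val ∧ l.val < s then v l - ε else v l with hv'def
      have hbσ : ∀ l : Fin n, l ∈ K → b (σ l) = β (σ l) - ε * Real.sign (β (σ l)) := by
        intro l hl
        simp only [hKdef, Finset.mem_filter, Finset.mem_univ, true_and] at hl
        simp only [hbdef, Equiv.symm_apply_apply]
        rw [if_pos hl]
      have hbσ' : ∀ l : Fin n, l ∉ K → b (σ l) = β (σ l) := by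
        intro l hl
        simp only [hKdef, Finset.mem_filter, Finset.mem_univ, true_and] at hl
        simp only [hbdef, Equiv.symm_apply_apply]
        rw [if_neg hl]
      have hbabs : ∀ l : Fin n, |b (σ l)| = v' l := by
        intro l
        by_cases hl : l ∈ K
        · have hmem : k ≤ l.val ∧ l.val < s := by
            simpa [hKdef, Finset.mem_filter] using hl
          have hεv : ε ≤ v l := le_trans hε2 (hvK l hl)
          rw [hbσ l hl]
          have habs1 : |β (σ l) - ε * Real.sign (β (σ l))| = v l - ε := by
            rcases lt_trichotomy (β (σ l)) 0 with hβ | hβ | hβ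
            · have e2 : v l = - β (σ l) := by rw [← hv l]; exact abs_of_nonpos hβ.le
              rw [Real.sign_of_neg hβ]
              rw [abs_of_nonpos (by nlinarith)]
              linarith
            · exfalso
              have h := hv l
              rw [hβ, abs_zero] at h
              linarith [hvKpos l hl]
            · have e2 : v l = β (σ l) := by rw [← hv l]; exact abs_of_pos hβ
              rw [Real.sign_of_pos hβ]
              rw [abs_of_nonneg (by nlinarith)]
              linarith
          rw [habs1]
          simp only [hv'def]
          rw [if_pos hmem]
        · have hmem : ¬(k ≤ l.val ∧ l.val < s) := by
            simpa [hKdef, Finset.mem_filter] using hl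
          rw [hbσ' l hl, hv l]
          simp only [hv'def]
          rw [if_neg hmem]
      have hv'anti : Antitone v' := by
        intro a b' hab
        have hab' : a.val ≤ b'.val := hab
        simp only [hv'def]
        by_cases hbb : k ≤ b'.val ∧ b'.val < s
        · rw [if_pos hbb]
          by_cases ha : k ≤ a.val ∧ a.val < s
          · rw [if_pos ha]
            exact sub_le_sub_right (hvanti hab) ε
          · rw [if_neg ha]
            have := hvanti hab
            linarith
        · rw [if_neg hbb]
          by_cases ha : k ≤ a.val ∧ a.val < s
          · rw [if_pos ha]
            have hbs : s ≤ b'.val := by omega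
            have hvb : v b' = 0 := by
              by_contra h
              have := (hSUPP b').mp h
              omega
            have hεa : ε0 ≤ v a := by
              apply hvanti
              exact Fin.le_def.mpr (by simp; omega)
            rw [hvb]
            linarith
          · rw [if_neg ha]
            exact hvanti hab
      have hsorted : sortedDesc (fun j' => |b j'|) = v' := by
        have h1 : (fun j' => |b j'|) ∘ σ = v' := funext hbabs
        rw [← sortedDesc_comp_perm (fun j' => |b j'|) σ, h1, sortedDesc_of_antitone v' hv'anti]
      have hpen : ∑ j', μ j' * sortedDesc (fun j2 => |b j2|) j'
          = ∑ j', μ j' * v j' + ∑ l ∈ K, (-(ε * μ l)) := by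
        rw [hsorted]
        have hloc := sum_diff_localized (Equiv.refl (Fin n)) (fun l => μ l * v' l)
          (fun l => μ l * v l) K (fun l hl => by
            have hmem : ¬(k ≤ l.val ∧ l.val < s) := by
              simpa [hKdef, Finset.mem_filter] using hl
            simp only [Equiv.refl_apply, hv'def]
            rw [if_neg hmem])
        simp only [Equiv.refl_apply] at hloc
        rw [hloc]
        congr 1
        apply Finset.sum_congr rfl
        intro l hl
        have hmem : k ≤ l.val ∧ l.val < s := by
          simpa [hKdef, Finset.mem_filter] using hl
        simp only [hv'def]
        rw [if_pos hmem]
        ring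
      have hquad : ∑ j', (z j' - b j') ^ 2
          = ∑ j', (z j' - β j') ^ 2 + ∑ l ∈ K, ((u l - v l + ε) ^ 2 - (u l - v l) ^ 2) := by
        have hloc := sum_diff_localized σ (fun j' => (z j' - b j') ^ 2)
          (fun j' => (z j' - β j') ^ 2) K (fun l hl => by
            show (z (σ l) - b (σ l)) ^ 2 = (z (σ l) - β (σ l)) ^ 2
            rw [hbσ' l hl])
        rw [hloc]
        congr 1
        apply Finset.sum_congr rfl
        intro l hl
        show (z (σ l) - b (σ l)) ^ 2 - (z (σ l) - β (σ l)) ^ 2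
            = (u l - v l + ε) ^ 2 - (u l - v l) ^ 2
        have h1 := hbσ l hl
        have h2 : (z (σ l) - (β (σ l) - ε * Real.sign (β (σ l)))) ^ 2 = (u l - v l + ε) ^ 2 := by
          rcases lt_trichotomy (β (σ l)) 0 with hβ | hβ | hβ
          · rcases hAL (σ l) with ⟨ha1, ha2⟩ | ⟨ha1, ha2⟩
            · linarith
            · have e1 : u l = - z (σ l) := by rw [← hu l]; exact abs_of_nonpos (le_trans ha1 ha2)
              have e2 : v l = - β (σ l) := by rw [← hv l]; exact abs_of_nonpos ha2
              rw [Real.sign_of_neg hβ, e1, e2]; ring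
          · exfalso
            have h := hv l
            rw [hβ, abs_zero] at h
            linarith [hvKpos l hl]
          · rcases hAL (σ l) with ⟨ha1, ha2⟩ | ⟨ha1, ha2⟩
            · have e1 : u l = z (σ l) := by rw [← hu l]; exact abs_of_nonneg (le_trans ha1 ha2)
              have e2 : v l = β (σ l) := by rw [← hv l]; exact abs_of_nonneg ha1
              rw [Real.sign_of_pos hβ, e1, e2]; ring
            · linarith
        have h3 : (z (σ l) - β (σ l)) ^ 2 = (u l - v l) ^ 2 := by
          rw [hALquad (σ l), hu l, hv l]
        rw [h1, h2, h3]
      have hm := hmin b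
      rw [hpen, hquad] at hm
      have e1 : ε * (∑ l ∈ K, (u l - v l - μ l)) + ε ^ 2 * (K.card * (1 / 2))
          = ∑ l ∈ K, (ε * (u l - v l - μ l) + ε ^ 2 * (1 / 2)) := by
        rw [Finset.sum_add_distrib, ← Finset.mul_sum, Finset.sum_const, nsmul_eq_mul]
        ring
      have e2 : (1 / 2) * ∑ l ∈ K, ((u l - v l + ε) ^ 2 - (u l - v l) ^ 2)
            + ∑ l ∈ K, (-(ε * μ l))
          = ∑ l ∈ K, ((1 / 2) * ((u l - v l + ε) ^ 2 - (u l - v l) ^ 2) + (-(ε * μ l))) := by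
        rw [Finset.sum_add_distrib, Finset.mul_sum]
      have e3 : ∑ l ∈ K, ((1 / 2) * ((u l - v l + ε) ^ 2 - (u l - v l) ^ 2) + (-(ε * μ l)))
          = ∑ l ∈ K, (ε * (u l - v l - μ l) + ε ^ 2 * (1 / 2)) := by
        apply Finset.sum_congr rfl
        intro l _
        ring
      rw [e1]
      rw [← e3, ← e2]
      linarith
    have hA := eps_limit _ _ ε0 hε0pos hkey
    have hvsum : ∑ l ∈ K, (u l - μ l) = ∑ l ∈ K, (u l - v l - μ l) + ∑ l ∈ K, v l := by
      rw [← Finset.sum_add_distrib]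
      apply Finset.sum_congr rfl
      intro l _
      ring
    have hKne : K.Nonempty := by
      refine ⟨⟨k, by omega⟩, ?_⟩
      simp only [hKdef, Finset.mem_filter, Finset.mem_univ, true_and]
      simp
      omega
    have hvpos : 0 < ∑ l ∈ K, v l := Finset.sum_pos (fun l hl => hvKpos l hl) hKne
    have htrans : ∑ l ∈ K, (u l - μ l) = ∑ l ∈ Finset.Ico k s, (pad u l - pad μ l) := by
      rw [hKdef, sum_filter_eq_sum_ico (fun l => u l - μ l) k s hsn]
      apply Finset.sum_congr rfl
      intro l hl
      rw [Finset.mem_Ico] at hl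
      have hln : l < n := lt_of_lt_of_le hl.2 hsn
      rw [pad_lt _ hln, pad_lt u hln, pad_lt μ hln]
    rw [← htrans, hvsum]
    linarith
  · -- G2 : existence of a nonpositive trailing sum beyond s
    intro j hsj hjn
    by_cases hzero : ∃ l0 : ℕ, s ≤ l0 ∧ l0 < j ∧ pad u l0 = 0
    · obtain ⟨l0, hl1, hl2, hl3⟩ := hzero
      refine ⟨l0, hl1, hl2, ?_⟩
      apply Finset.sum_nonpos
      intro l hl
      rw [Finset.mem_Ico] at hl
      have hu1 : pad u l ≤ 0 := hl3 ▸ pad_antitone u huanti hu0 l0 l hl.1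
      have hu2 : 0 ≤ pad u l := pad_nonneg u hu0 l
      have hμ1 : 0 ≤ pad μ l := pad_nonneg μ hμ0 l
      linarith
    · push_neg at hzero
      refine ⟨s, le_refl _, hsj, ?_⟩
      set K : Finset (Fin n) := Finset.univ.filter (fun l : Fin n => s ≤ l.val ∧ l.val < j)
        with hKdef
      have huKpos : ∀ l ∈ K, 0 < u l := by
        intro l hl
        simp only [hKdef, Finset.mem_filter, Finset.mem_univ, true_and] at hl
        have h := hzero l.val hl.1 hl.2
        rw [pad_lt u l.isLt] at h
        have : u ⟨l.val, l.isLt⟩ = u l := by congr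
        rw [this] at h
        exact lt_of_le_of_ne (hu0 l) (Ne.symm h)
      have hvKzero : ∀ l ∈ K, v l = 0 := by
        intro l hl
        simp only [hKdef, Finset.mem_filter, Finset.mem_univ, true_and] at hl
        by_contra h
        have := (hSUPP l).mp h
        omega
      obtain ⟨ε0, hε0pos, hε0le⟩ :
          ∃ e : ℝ, 0 < e ∧ ∀ l : Fin n, l.val < s → e ≤ v l := by
        rcases Nat.eq_zero_or_pos s with hs0 | hs0
        · exact ⟨1, one_pos, fun l hl => absurd hl (by omega)⟩
        · have hs1 : s - 1 < n := by omega
          refine ⟨v ⟨s - 1, hs1⟩, ?_, ?_⟩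
          · have h := (hSUPP ⟨s - 1, hs1⟩).mpr (by simp; omega)
            exact lt_of_le_of_ne (hv0 _) (Ne.symm h)
          · intro l hls
            apply hvanti
            exact Fin.le_def.mpr (by simp; omega)
      have hkey : ∀ ε : ℝ, 0 < ε → ε ≤ ε0 →
          0 ≤ ε * (∑ l ∈ K, (μ l - u l)) + ε ^ 2 * (K.card * (1 / 2)) := by
        intro ε hε1 hε2
        set b : Fin n → ℝ := fun j' =>
          if s ≤ (σ.symm j').val ∧ (σ.symm j').val < j then ε * Real.sign (z j')
          else β j' with hbdef
        set v' : Fin n → ℝ := fun l => if s ≤ l.val ∧ l.val < j then ε else v l with hv'def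
        have hbσ : ∀ l : Fin n, l ∈ K → b (σ l) = ε * Real.sign (z (σ l)) := by
          intro l hl
          simp only [hKdef, Finset.mem_filter, Finset.mem_univ, true_and] at hl
          simp only [hbdef, Equiv.symm_apply_apply]
          rw [if_pos hl]
        have hbσ' : ∀ l : Fin n, l ∉ K → b (σ l) = β (σ l) := by
          intro l hl
          simp only [hKdef, Finset.mem_filter, Finset.mem_univ, true_and] at hl
          simp only [hbdef, Equiv.symm_apply_apply]
          rw [if_neg hl]
        have hzKne : ∀ l ∈ K, z (σ l) ≠ 0 := by
          intro l hl h0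
          have := huKpos l hl
          rw [← hu l, h0, abs_zero] at this
          exact lt_irrefl _ this
        have hβKzero : ∀ l ∈ K, β (σ l) = 0 := by
          intro l hl
          have := hvKzero l hl
          rw [← hv l] at this
          exact abs_eq_zero.mp this
        have hbabs : ∀ l : Fin n, |b (σ l)| = v' l := by
          intro l
          by_cases hl : l ∈ K
          · have hmem : s ≤ l.val ∧ l.val < j := by
              simpa [hKdef, Finset.mem_filter] using hl
            rw [hbσ l hl, mul_comm, abs_sign_mul _ _ (hzKne l hl), abs_of_pos hε1]
            simp only [hv'def]
            rw [if_pos hmem]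
          · have hmem : ¬(s ≤ l.val ∧ l.val < j) := by
              simpa [hKdef, Finset.mem_filter] using hl
            rw [hbσ' l hl, hv l]
            simp only [hv'def]
            rw [if_neg hmem]
        have hv'anti : Antitone v' := by
          intro a b' hab
          have hab' : a.val ≤ b'.val := hab
          simp only [hv'def]
          by_cases hbb : s ≤ b'.val ∧ b'.val < j
          · rw [if_pos hbb]
            by_cases ha : s ≤ a.val ∧ a.val < j
            · rw [if_pos ha]
            · rw [if_neg ha]
              have has : a.val < s := by omega
              exact le_trans hε2 (hε0le a has)
          · rw [if_neg hbb]
            by_cases ha : s ≤ a.val ∧ a.val < j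
            · rw [if_pos ha]
              have hbs : s ≤ b'.val := by omega
              have hvb : v b' = 0 := by
                by_contra h
                have := (hSUPP b').mp h
                omega
              rw [hvb]
              linarith
            · rw [if_neg ha]
              exact hvanti hab
        have hsorted : sortedDesc (fun j' => |b j'|) = v' := by
          have h1 : (fun j' => |b j'|) ∘ σ = v' := funext hbabs
          rw [← sortedDesc_comp_perm (fun j' => |b j'|) σ, h1, sortedDesc_of_antitone v' hv'anti]
        have hpen : ∑ j', μ j' * sortedDesc (fun j2 => |b j2|) j'
            = ∑ j', μ j' * v j' + ∑ l ∈ K, (ε * μ l) := by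
          rw [hsorted]
          have hloc := sum_diff_localized (Equiv.refl (Fin n)) (fun l => μ l * v' l)
            (fun l => μ l * v l) K (fun l hl => by
              have hmem : ¬(s ≤ l.val ∧ l.val < j) := by
                simpa [hKdef, Finset.mem_filter] using hl
              simp only [Equiv.refl_apply, hv'def]
              rw [if_neg hmem])
          simp only [Equiv.refl_apply] at hloc
          rw [hloc]
          congr 1
          apply Finset.sum_congr rfl
          intro l hl
          have hmem : s ≤ l.val ∧ l.val < j := by
            simpa [hKdef, Finset.mem_filter] using hl
          simp only [hv'def]
          rw [if_pos hmem, hvKzero l hl]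
          ring
        have hquad : ∑ j', (z j' - b j') ^ 2
            = ∑ j', (z j' - β j') ^ 2 + ∑ l ∈ K, ((u l - ε) ^ 2 - u l ^ 2) := by
          have hloc := sum_diff_localized σ (fun j' => (z j' - b j') ^ 2)
            (fun j' => (z j' - β j') ^ 2) K (fun l hl => by
              show (z (σ l) - b (σ l)) ^ 2 = (z (σ l) - β (σ l)) ^ 2
              rw [hbσ' l hl])
          rw [hloc]
          congr 1
          apply Finset.sum_congr rfl
          intro l hl
          show (z (σ l) - b (σ l)) ^ 2 - (z (σ l) - β (σ l)) ^ 2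
              = (u l - ε) ^ 2 - u l ^ 2
          have h1 := hbσ l hl
          have h2 : (z (σ l) - ε * Real.sign (z (σ l))) ^ 2 = (u l - ε) ^ 2 := by
            have := sign_mul_quad (z (σ l)) ε (hzKne l hl)
            rw [mul_comm] at this
            rw [this, hu l]
          have h3 : (z (σ l) - β (σ l)) ^ 2 = u l ^ 2 := by
            rw [hβKzero l hl, sub_zero, ← hu l, sq_abs]
          rw [h1, h2, h3]
        have hm := hmin b
        rw [hpen, hquad] at hm
        have e1 : ε * (∑ l ∈ K, (μ l - u l)) + ε ^ 2 * (K.card * (1 / 2))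
            = ∑ l ∈ K, (ε * (μ l - u l) + ε ^ 2 * (1 / 2)) := by
          rw [Finset.sum_add_distrib, ← Finset.mul_sum, Finset.sum_const, nsmul_eq_mul]
          ring
        have e2 : (1 / 2) * ∑ l ∈ K, ((u l - ε) ^ 2 - u l ^ 2) + ∑ l ∈ K, (ε * μ l)
            = ∑ l ∈ K, ((1 / 2) * ((u l - ε) ^ 2 - u l ^ 2) + ε * μ l) := by
          rw [Finset.sum_add_distrib, Finset.mul_sum]
        have e3 : ∑ l ∈ K, ((1 / 2) * ((u l - ε) ^ 2 - u l ^ 2) + ε * μ l)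
            = ∑ l ∈ K, (ε * (μ l - u l) + ε ^ 2 * (1 / 2)) := by
          apply Finset.sum_congr rfl
          intro l _
          ring
        rw [e1, ← e3, ← e2]
        linarith
      have hA := eps_limit _ _ ε0 hε0pos hkey
      have htrans : ∑ l ∈ K, (u l - μ l) = ∑ l ∈ Finset.Ico s j, (pad u l - pad μ l) := by
        rw [hKdef, sum_filter_eq_sum_ico (fun l => u l - μ l) s j hjn]
        apply Finset.sum_congr rfl
        intro l hl
        rw [Finset.mem_Ico] at hl
        have hln : l < n := lt_of_lt_of_le hl.2 hjn
        rw [pad_lt _ hln, pad_lt u hln, pad_lt μ hln]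
      have hflip : ∑ l ∈ K, (u l - μ l) = - ∑ l ∈ K, (μ l - u l) := by
        rw [← Finset.sum_neg_distrib]
        apply Finset.sum_congr rfl
        intro l _
        ring
      rw [← htrans, hflip]
      linarith

lemma antitone_eq_of_multiset {n : ℕ} (f g : Fin n → ℝ) (hf : Antitone f) (hg : Antitone g)
    (h : Multiset.map f Finset.univ.val = Multiset.map g Finset.univ.val) : f = g := by
  have h1 : Finset.univ.val.map f = List.ofFn f := Fin.univ_val_map f
  have h2 : Finset.univ.val.map g = List.ofFn g := Fin.univ_val_map g
  have hperm : List.Perm (List.ofFn f) (List.ofFn g) := by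
    rw [h1, h2] at h
    exact Multiset.coe_eq_coe.mp h
  have hs1 : (List.ofFn f).Pairwise (· ≥ ·) := by
    rw [List.pairwise_ofFn]
    intro a b hab
    exact hf hab.le
  have hs2 : (List.ofFn g).Pairwise (· ≥ ·) := by
    rw [List.pairwise_ofFn]
    intro a b hab
    exact hg hab.le
  exact List.ofFn_injective (List.Perm.eq_of_pairwise' hs1 hs2 hperm)

lemma multiset_sortedDesc {n : ℕ} (v : Fin n → ℝ) :
    Multiset.map (sortedDesc v) Finset.univ.val = Multiset.map v Finset.univ.val := by
  obtain ⟨σ, hσ⟩ := exists_sortPerm v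
  rw [← hσ]
  have : Multiset.map (v ∘ σ) Finset.univ.val = Multiset.map v (Multiset.map σ Finset.univ.val) := by
    rw [Multiset.map_map]
  rw [this]
  congr 1
  have := Finset.map_univ_equiv (σ : Fin n ≃ Fin n)
  calc Multiset.map (⇑σ) Finset.univ.val = (Finset.univ.map (σ : Fin n ≃ Fin n).toEmbedding).val := rfl
    _ = Finset.univ.val := by rw [this]

lemma multiset_succAbove {n : ℕ} (y : Fin (n + 1) → ℝ) (i : Fin (n + 1)) :
    Multiset.map y Finset.univ.val
      = y i ::ₘ Multiset.map (fun j => y (i.succAbove j)) Finset.univ.val := by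
  have h := Fin.univ_succAbove n i
  rw [h]
  rw [Finset.cons_val, Multiset.map_cons]
  congr 1
  rw [Finset.map_val, Multiset.map_map]
  rfl

lemma lower_set_char {n : ℕ} (P : Fin n → Prop) (hP : ∀ a b : Fin n, a ≤ b → P b → P a) :
    ∀ l : Fin n, P l ↔ l.val < (Finset.univ.filter P).card := by
  intro l
  constructor
  · intro h
    have hsub : (Finset.univ.filter (fun l' : Fin n => 0 ≤ l'.val ∧ l'.val < l.val + 1))
        ⊆ (Finset.univ.filter P) := by
      intro l' hl'
      simp only [Finset.mem_filter, Finset.mem_univ, true_and] at hl' ⊢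
      exact hP l' l (Fin.le_def.mpr (by omega)) h
    have hcard1 := Finset.card_le_card hsub
    rw [card_filter_range 0 (l.val + 1) l.isLt] at hcard1
    omega
  · intro hl
    by_contra h0
    have hsub : (Finset.univ.filter P)
        ⊆ (Finset.univ.filter (fun l' : Fin n => 0 ≤ l'.val ∧ l'.val < l.val)) := by
      intro l' hl'
      simp only [Finset.mem_filter, Finset.mem_univ, true_and] at hl' ⊢
      refine ⟨Nat.zero_le _, ?_⟩
      by_contra hge
      push_neg at hge
      exact h0 (hP l l' (Fin.le_def.mpr hge) hl')
    have hcard1 := Finset.card_le_card hsub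
    rw [card_filter_range 0 l.val (le_of_lt l.isLt)] at hcard1
    omega

lemma del_sorted {n : ℕ} (u : Fin (n + 1) → ℝ) (w : Fin n → ℝ)
    (hu : Antitone u) (hw : Antitone w) (c : ℝ)
    (hm : Multiset.map u Finset.univ.val = c ::ₘ Multiset.map w Finset.univ.val) :
    ∃ p : ℕ, p ≤ n ∧ pad u p = c ∧ (∀ l : ℕ, l < p → pad w l = pad u l)
      ∧ (∀ l : ℕ, p ≤ l → pad w l = pad u (l + 1)) := by
  classical
  set p : ℕ := (Finset.univ.filter (fun l : Fin n => c < w l)).card with hpdef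
  have hpn : p ≤ n := by
    rw [hpdef]
    calc (Finset.univ.filter (fun l : Fin n => c < w l)).card
        ≤ (Finset.univ : Finset (Fin n)).card := Finset.card_filter_le _ _
      _ = n := by simp
  have hpre : ∀ l : Fin n, c < w l ↔ l.val < p := by
    apply lower_set_char
    intro a b hab hb
    exact lt_of_lt_of_le hb (hw hab)
  have hc_lt : ∀ lv : ℕ, lv < p → c < pad w lv := by
    intro lv hlv
    rw [pad_lt w (by omega)]
    exact (hpre _).mpr hlv
  have hc_ge : ∀ lv : ℕ, p ≤ lv → lv < n → pad w lv ≤ c := by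
    intro lv h1 h2
    rw [pad_lt w h2]
    by_contra hcon
    push_neg at hcon
    have := (hpre ⟨lv, h2⟩).mp hcon
    simp at this
    omega
  have hwpad : ∀ x y : ℕ, x ≤ y → y < n → pad w y ≤ pad w x := by
    intro x y hxy hy
    rw [pad_lt w hy, pad_lt w (by omega)]
    exact hw (Fin.le_def.mpr (by simpa using hxy))
  set q : Fin (n + 1) := ⟨p, by omega⟩ with hqdef
  set W : Fin (n + 1) → ℝ := q.insertNth c w with hWdef
  have hW_eq : W q = c := by
    rw [hWdef]
    exact Fin.insertNth_apply_same (α := fun _ => ℝ) q c w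
  have hW_lt : ∀ (lv : ℕ) (h2 : lv < n + 1), lv < p → W ⟨lv, h2⟩ = pad w lv := by
    intro lv h2 h
    have hl : (⟨lv, h2⟩ : Fin (n + 1)) = q.succAbove ⟨lv, by omega⟩ := by
      rw [Fin.succAbove_of_castSucc_lt]
      · apply Fin.ext
        simp [Fin.castSucc]
      · rw [Fin.lt_def]
        simp [hqdef, Fin.castSucc]
        omega
    rw [hl, hWdef, Fin.insertNth_apply_succAbove]
    exact (pad_lt w (by omega)).symm
  have hW_gt : ∀ (lv : ℕ) (h2 : lv < n + 1), p < lv → W ⟨lv, h2⟩ = pad w (lv - 1) := by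
    intro lv h2 h1
    have hl : (⟨lv, h2⟩ : Fin (n + 1)) = q.succAbove ⟨lv - 1, by omega⟩ := by
      rw [Fin.succAbove_of_le_castSucc]
      · apply Fin.ext
        simp [Fin.succ]
        omega
      · rw [Fin.le_def]
        simp [hqdef, Fin.castSucc]
        omega
    rw [hl, hWdef, Fin.insertNth_apply_succAbove]
    exact (pad_lt w (by omega)).symm
  have hW_eq' : ∀ (lv : ℕ) (h2 : lv < n + 1), lv = p → W ⟨lv, h2⟩ = c := by
    intro lv h2 h
    have : (⟨lv, h2⟩ : Fin (n + 1)) = q := by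
      apply Fin.ext
      simp [hqdef, h]
    rw [this]
    exact hW_eq
  have hWanti : Antitone W := by
    intro a b hab
    obtain ⟨av, ha2⟩ := a
    obtain ⟨bv, hb2⟩ := b
    have hab' : av ≤ bv := hab
    rcases lt_trichotomy av p with ha | ha | ha
    · rw [hW_lt av ha2 ha]
      rcases lt_trichotomy bv p with hb | hb | hb
      · rw [hW_lt bv hb2 hb]
        exact hwpad av bv hab' (by omega)
      · rw [hW_eq' bv hb2 hb]
        exact le_of_lt (hc_lt av ha)
      · rw [hW_gt bv hb2 hb]
        have h1 : pad w (bv - 1) ≤ c := hc_ge (bv - 1) (by omega) (by omega)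
        have h2 := hc_lt av ha
        linarith
    · rw [hW_eq' av ha2 ha]
      rcases lt_trichotomy bv p with hb | hb | hb
      · omega
      · rw [hW_eq' bv hb2 hb]
      · rw [hW_gt bv hb2 hb]
        exact hc_ge (bv - 1) (by omega) (by omega)
    · rw [hW_gt av ha2 ha]
      have hb : p < bv := by omega
      rw [hW_gt bv hb2 hb]
      exact hwpad (av - 1) (bv - 1) (by omega) (by omega)
  have hWm : Multiset.map W Finset.univ.val = c ::ₘ Multiset.map w Finset.univ.val := by
    rw [multiset_succAbove W q, hW_eq]
    congr 1
    apply Multiset.map_congr rfl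
    intro j _
    exact Fin.insertNth_apply_succAbove (α := fun _ => ℝ) q c w j
  have hWu : u = W := antitone_eq_of_multiset u W hu hWanti (by rw [hWm, hm])
  refine ⟨p, hpn, ?_, ?_, ?_⟩
  · rw [pad_lt u (show p < n + 1 by omega), hWu]
    exact hW_eq' p (by omega) rfl
  · intro l hl
    rw [pad_lt u (by omega : l < n + 1), hWu]
    exact (hW_lt l (by omega) hl).symm
  · intro l hl
    by_cases hln : l < n
    · rw [pad_lt u (by omega : l + 1 < n + 1), hWu]
      have := hW_gt (l + 1) (by omega) (by omega)
      simp only [Nat.add_sub_cancel] at this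
      exact this.symm
    · rw [pad_ge w (by omega), pad_ge u (by omega)]

lemma sum_shift (f : ℕ → ℝ) (a b : ℕ) :
    ∑ l ∈ Finset.Ico a b, f (l + 1) = ∑ l ∈ Finset.Ico (a + 1) (b + 1), f l := by
  rw [← Finset.map_add_right_Ico a b 1, Finset.sum_map]
  rfl

lemma combinat (m : ℕ) (U L Ut : ℕ → ℝ) (r st p : ℕ)
    (hUa : ∀ a b : ℕ, a ≤ b → U b ≤ U a)
    (hLa : ∀ a b : ℕ, a ≤ b → L b ≤ L a)
    (hUt1 : ∀ l, l < p → Ut l = U l)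
    (hUt2 : ∀ l, p ≤ l → Ut l = U (l + 1))
    (hr1 : 1 < r) (hrm : r ≤ m + 1) (hsm : st ≤ m) (hpm : p ≤ m)
    (hUc : L (r - 1) < U p)
    (hP : ∀ k, k < r → 0 < ∑ l ∈ Finset.Ico k r, (U l - L l))
    (hQ : ∀ j, r < j → j ≤ m + 1 →
      ∃ k, r ≤ k ∧ k < j ∧ ∑ l ∈ Finset.Ico k j, (U l - L l) ≤ 0)
    (hPt : ∀ k, k < st → 0 < ∑ l ∈ Finset.Ico k st, (Ut l - L (l + 1)))
    (hQt : ∀ j, st < j → j ≤ m →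
      ∃ k, st ≤ k ∧ k < j ∧ ∑ l ∈ Finset.Ico k j, (Ut l - L (l + 1)) ≤ 0) :
    st = r - 1 := by
  -- Step 0 : p < r
  have hpr : p < r := by
    by_contra hpr
    push_neg at hpr
    have hPP : ∀ k, k < p + 1 → 0 < ∑ l ∈ Finset.Ico k (p + 1), (U l - L l) := by
      intro k hk
      have hterm : ∀ l ∈ Finset.Ico r (p + 1), 0 < U l - L l := by
        intro l hl
        rw [Finset.mem_Ico] at hl
        have h1 : U p ≤ U l := hUa l p (by omega)
        have h2 : L l ≤ L (r - 1) := hLa (r - 1) l (by omega)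
        linarith
      rcases lt_or_ge k r with hkr | hkr
      · rw [← Finset.sum_Ico_consecutive _ (le_of_lt hkr) (by omega : r ≤ p + 1)]
        have h1 := hP k hkr
        have h2 : 0 ≤ ∑ l ∈ Finset.Ico r (p + 1), (U l - L l) :=
          Finset.sum_nonneg fun l hl => (hterm l hl).le
        linarith
      · apply Finset.sum_pos
        · intro l hl
          apply hterm
          rw [Finset.mem_Ico] at hl ⊢
          omega
        · exact ⟨k, Finset.mem_Ico.mpr (by omega)⟩
    obtain ⟨k, hk1, hk2, hk3⟩ := hQ (p + 1) (by omega) (by omega)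
    exact absurd hk3 (not_le.mpr (hPP k hk2))
  -- Step 1 : the reduced prefix property at r - 1
  have hPtr : ∀ k, k < r - 1 → 0 < ∑ l ∈ Finset.Ico k (r - 1), (Ut l - L (l + 1)) := by
    intro k hk
    rcases le_or_gt p k with hpk | hpk
    · have he : ∑ l ∈ Finset.Ico k (r - 1), (Ut l - L (l + 1))
          = ∑ l ∈ Finset.Ico (k + 1) (r - 1 + 1), (U l - L l) := by
        rw [← sum_shift (fun l => U l - L l) k (r - 1)]
        apply Finset.sum_congr rfl
        intro l hl
        rw [Finset.mem_Ico] at hl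
        rw [hUt2 l (by omega)]
      rw [he, (by omega : r - 1 + 1 = r)]
      exact hP (k + 1) (by omega)
    · have hterm : ∀ l ∈ Finset.Ico k (r - 1), U (l + 1) - L (l + 1) ≤ Ut l - L (l + 1) := by
        intro l hl
        rcases lt_or_ge l p with h | h
        · rw [hUt1 l h]
          have := hUa l (l + 1) (by omega)
          linarith
        · rw [hUt2 l h]
      have h1 := Finset.sum_le_sum hterm
      have h2 : ∑ l ∈ Finset.Ico k (r - 1), (U (l + 1) - L (l + 1))
          = ∑ l ∈ Finset.Ico (k + 1) r, (U l - L l) := by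
        rw [sum_shift (fun l => U l - L l) k (r - 1), (by omega : r - 1 + 1 = r)]
      have h3 := hP (k + 1) (by omega)
      rw [h2] at h1
      linarith
  -- Step 3 : lifting positivity from the reduced problem to the full problem
  have hlift : ∀ jt, r - 1 ≤ jt → jt ≤ m →
      (∀ k, k < jt → 0 < ∑ l ∈ Finset.Ico k jt, (Ut l - L (l + 1))) →
      ∀ k, k < jt + 1 → 0 < ∑ l ∈ Finset.Ico k (jt + 1), (U l - L l) := by
    intro jt hj1 hj2 hPt' k hk
    rcases le_or_gt k p with hkp | hkp
    · rw [← Finset.sum_Ico_consecutive _ (by omega : k ≤ r) (by omega : r ≤ jt + 1)]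
      have h1 := hP k (by omega)
      have h2 : 0 ≤ ∑ l ∈ Finset.Ico r (jt + 1), (U l - L l) := by
        rcases eq_or_lt_of_le hj1 with he | hlt
        · rw [show r = jt + 1 by omega]
          simp
        · have h3 := hPt' (r - 1) hlt
          have h4 : ∑ l ∈ Finset.Ico (r - 1) jt, (Ut l - L (l + 1))
              = ∑ l ∈ Finset.Ico r (jt + 1), (U l - L l) := by
            have h5 : ∑ l ∈ Finset.Ico (r - 1) jt, (Ut l - L (l + 1))
                = ∑ l ∈ Finset.Ico (r - 1) jt, (U (l + 1) - L (l + 1)) := by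
              apply Finset.sum_congr rfl
              intro l hl
              rw [Finset.mem_Ico] at hl
              rw [hUt2 l (by omega)]
            rw [h5, sum_shift (fun l => U l - L l) (r - 1) jt, (by omega : r - 1 + 1 = r)]
          linarith
      linarith
    · have he : ∑ l ∈ Finset.Ico k (jt + 1), (U l - L l)
          = ∑ l ∈ Finset.Ico (k - 1) jt, (Ut l - L (l + 1)) := by
        have h5 : ∑ l ∈ Finset.Ico (k - 1) jt, (Ut l - L (l + 1))
            = ∑ l ∈ Finset.Ico (k - 1) jt, (U (l + 1) - L (l + 1)) := by
          apply Finset.sum_congr rfl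
          intro l hl
          rw [Finset.mem_Ico] at hl
          rw [hUt2 l (by omega)]
        rw [h5, sum_shift (fun l => U l - L l) (k - 1) jt, (by omega : k - 1 + 1 = k)]
      rw [he]
      exact hPt' (k - 1) (by omega)
  -- Step 2 : st ≥ r - 1
  have hge : r - 1 ≤ st := by
    by_contra hcon
    push_neg at hcon
    obtain ⟨k, hk1, hk2, hk3⟩ := hQt (r - 1) hcon (by omega)
    exact absurd hk3 (not_le.mpr (hPtr k hk2))
  -- Step 4 : st ≤ r - 1
  have hle : st ≤ r - 1 := by
    by_contra hcon
    push_neg at hcon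
    have hfull := hlift st (by omega) hsm hPt
    obtain ⟨k, hk1, hk2, hk3⟩ := hQ (st + 1) (by omega) (by omega)
    exact absurd hk3 (not_le.mpr (hfull k hk2))
  omega

/-- **Reduction lemma for SLOPE (orthogonal/identity design).** Let `R(y)` be the
number of nonzero entries of the SLOPE estimator of `y ∈ ℝ^{m+1}` with weights
`λ_1 ≥ ... ≥ λ_{m+1} ≥ 0`. Fix an index `i`; for `y ∈ ℝ^{m+1}` let `ỹ ∈ ℝ^m` be `y`
with its `i`-th coordinate removed, and let `R̃(ỹ)` be the number of nonzero entries
of the SLOPE estimator of `ỹ` with weights `(λ_2,...,λ_{m+1})`. Then for every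
integer `r > 1`, `{y : |y_i| > λ_r and R(y) = r} ⊆ {y : |y_i| > λ_r and R̃(ỹ) = r−1}`. -/
theorem slope_reduction_event_subset
    (m : ℕ) (lam : Fin (m + 1) → ℝ)
    (hmono : ∀ i j : Fin (m + 1), i ≤ j → lam j ≤ lam i)
    (hnonneg : ∀ i, 0 ≤ lam i)
    (βhat : (Fin (m + 1) → ℝ) → (Fin (m + 1) → ℝ))
    (hmin : ∀ y b : Fin (m + 1) → ℝ,
      (1 / 2) * ∑ j, (y j - βhat y j) ^ 2
          + ∑ j, lam j * sortedDesc (fun j' => |βhat y j'|) j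
        ≤ (1 / 2) * ∑ j, (y j - b j) ^ 2
          + ∑ j, lam j * sortedDesc (fun j' => |b j'|) j)
    (R : (Fin (m + 1) → ℝ) → ℕ)
    (hR : ∀ y, R y = (Finset.univ.filter fun j => βhat y j ≠ 0).card)
    (βtil : (Fin m → ℝ) → (Fin m → ℝ))
    (hmintil : ∀ z b : Fin m → ℝ,
      (1 / 2) * ∑ j, (z j - βtil z j) ^ 2
          + ∑ j, lam j.succ * sortedDesc (fun j' => |βtil z j'|) j
        ≤ (1 / 2) * ∑ j, (z j - b j) ^ 2
          + ∑ j, lam j.succ * sortedDesc (fun j' => |b j'|) j)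
    (Rtil : (Fin m → ℝ) → ℕ)
    (hRtil : ∀ z, Rtil z = (Finset.univ.filter fun j => βtil z j ≠ 0).card)
    (i : Fin (m + 1)) (r : ℕ) (hr1 : 1 < r) (hrm : r ≤ m + 1) :
    {y : Fin (m + 1) → ℝ | lam ⟨r - 1, by omega⟩ < |y i| ∧ R y = r}
      ⊆ {y : Fin (m + 1) → ℝ | lam ⟨r - 1, by omega⟩ < |y i|
          ∧ Rtil (fun j : Fin m => y (i.succAbove j)) = r - 1} := by
  intro y hy
  obtain ⟨hy1, hy2⟩ := hy
  refine ⟨hy1, ?_⟩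
  set zt : Fin m → ℝ := fun j => y (i.succAbove j) with hztdef
  -- full problem
  have hlamanti : Antitone lam := fun a b hab => hmono a b hab
  have hfull := slope_generic (m + 1) lam y (βhat y) hlamanti hnonneg (hmin y)
  have hsf : (Finset.univ.filter fun j => βhat y j ≠ 0).card = r := by
    rw [← hR y]; exact hy2
  rw [hsf] at hfull
  obtain ⟨hP, hQ⟩ := hfull
  -- reduced problem
  have hlamanti' : Antitone (fun l : Fin m => lam l.succ) := by
    intro a b hab
    exact hmono a.succ b.succ (Fin.succ_le_succ_iff.mpr hab)
  have hred := slope_generic m (fun l : Fin m => lam l.succ) zt (βtil zt)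
    hlamanti' (fun l => hnonneg l.succ) (hmintil zt)
  set st : ℕ := (Finset.univ.filter fun j => βtil zt j ≠ 0).card with hstdef
  obtain ⟨hPt, hQt⟩ := hred
  have hstm : st ≤ m := by
    rw [hstdef]
    calc (Finset.univ.filter fun j => βtil zt j ≠ 0).card
        ≤ (Finset.univ : Finset (Fin m)).card := Finset.card_filter_le _ _
      _ = m := by simp
  -- deletion structure of the sorted sequences
  have hmult : Multiset.map (sortedDesc fun j => |y j|) Finset.univ.val
      = |y i| ::ₘ Multiset.map (sortedDesc fun j => |zt j|) Finset.univ.val := by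
    rw [multiset_sortedDesc, multiset_sortedDesc]
    exact multiset_succAbove (fun j => |y j|) i
  obtain ⟨p, hpm, hpc, hdel1, hdel2⟩ := del_sorted (sortedDesc fun j => |y j|)
    (sortedDesc fun j => |zt j|) (sortedDesc_antitone_s6 _) (sortedDesc_antitone_s6 _) (|y i|) hmult
  -- padded reduced weights agree with shifted padded weights
  have hlampad : ∀ l : ℕ, pad (fun l : Fin m => lam l.succ) l = pad lam (l + 1) := by
    intro l
    by_cases h : l < m
    · rw [pad_lt _ h, pad_lt lam (by omega)]
      congr 1
    · rw [pad_ge _ (by omega), pad_ge lam (by omega)]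
  -- nonnegativity of sorted sequences
  have hUnn : ∀ l : Fin (m + 1), 0 ≤ (sortedDesc fun j => |y j|) l := fun l => abs_nonneg _
  have hUtnn : ∀ l : Fin m, 0 ≤ (sortedDesc fun j => |zt j|) l := fun l => abs_nonneg _
  -- rephrase the reduced bounds using the shifted weights
  have hPt' : ∀ k, k < st →
      0 < ∑ l ∈ Finset.Ico k st,
        (pad (sortedDesc fun j => |zt j|) l - pad lam (l + 1)) := by
    intro k hk
    have := hPt k hk
    calc (0:ℝ) < ∑ l ∈ Finset.Ico k st,
          (pad (sortedDesc fun j => |zt j|) l - pad (fun l : Fin m => lam l.succ) l) := this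
      _ = ∑ l ∈ Finset.Ico k st,
          (pad (sortedDesc fun j => |zt j|) l - pad lam (l + 1)) := by
          apply Finset.sum_congr rfl
          intro l _
          rw [hlampad l]
  have hQt' : ∀ j, st < j → j ≤ m →
      ∃ k, st ≤ k ∧ k < j ∧
        ∑ l ∈ Finset.Ico k j,
          (pad (sortedDesc fun j => |zt j|) l - pad lam (l + 1)) ≤ 0 := by
    intro j h1 h2
    obtain ⟨k, hk1, hk2, hk3⟩ := hQt j h1 h2
    refine ⟨k, hk1, hk2, ?_⟩
    calc ∑ l ∈ Finset.Ico k j,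
          (pad (sortedDesc fun j => |zt j|) l - pad lam (l + 1))
        = ∑ l ∈ Finset.Ico k j,
          (pad (sortedDesc fun j => |zt j|) l - pad (fun l : Fin m => lam l.succ) l) := by
          apply Finset.sum_congr rfl
          intro l _
          rw [hlampad l]
      _ ≤ 0 := hk3
  -- the key inequality |y i| > lam_r in padded form
  have hUc : pad lam (r - 1) < pad (sortedDesc fun j => |y j|) p := by
    rw [hpc, pad_lt lam (by omega : r - 1 < m + 1)]
    exact hy1
  -- conclude via the combinatorial lemma
  have hfinal := combinat m (pad (sortedDesc fun j => |y j|)) (pad lam)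
    (pad (sortedDesc fun j => |zt j|)) r st p
    (pad_antitone _ (sortedDesc_antitone_s6 _) hUnn)
    (pad_antitone _ hlamanti hnonneg)
    hdel1 hdel2 hr1 hrm hstm hpm hUc hP hQ hPt' hQt'
  rw [hRtil zt]
  rw [← hstdef]
  exact hfinal
end

section
/- Under the orthogonal-design linear model y = Xβ + ε with XᵀX = I_m and ε ~ N(0, I_n), let β̂ be the SLOPE estimator with nonincreasing nonnegative weights λ_1 ≥ ... ≥ λ_m ≥ 0 applied to ỹ = Xᵀy, let R be its number of nonzero coordinates and V the number of nonzero coordinates at indices i with β_i = 0. Let m₀ = #{i : β_i = 0} and let |q̂|_(1) ≥ ... ≥ |q̂|_(m₀) be the sorted absolute values of the coordinates of ỹ at the true-null indices. Then for every k ≤ m₀ and every r ≥ 1, the event {V ≥ k and R = r} is contained in the event {|q̂|_(1) ≥ λ_r, |q̂|_(2) ≥ λ_r, ..., |q̂|_(k) ≥ λ_r, and R = r}; in particular P(V ≥ k and R = r) ≤ P(|q̂|_(k) ≥ λ_r and R = r). -/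
open MeasureTheory ProbabilityTheory Finset Matrix
open scoped Classical

namespace SlopeAux

variable {N : ℕ}

/-- the permutation realizing sortedDesc -/
noncomputable def dperm (v : Fin N → ℝ) : Equiv.Perm (Fin N) :=
  Fin.revPerm.trans (Tuple.sort v)

lemma sortedDesc_eq (v : Fin N → ℝ) : sortedDesc v = v ∘ (dperm v) := rfl

lemma sortedDesc_antitone (v : Fin N → ℝ) : Antitone (sortedDesc v) := by
  intro i j hij
  exact Tuple.monotone_sort v (Fin.rev_le_rev.mpr hij)

lemma card_filter_perm {p q : Fin N → Prop} [DecidablePred p] [DecidablePred q]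
    (σ : Equiv.Perm (Fin N)) (hpq : ∀ i, p i ↔ q (σ i)) :
    (Finset.univ.filter p).card = (Finset.univ.filter q).card := by
  apply Finset.card_bij (fun i _ => σ i)
  · intro a ha
    simp only [Finset.mem_filter, Finset.mem_univ, true_and] at ha ⊢
    exact (hpq a).mp ha
  · intro a _ b _ hab
    exact σ.injective hab
  · intro b hb
    refine ⟨σ.symm b, ?_, by simp⟩
    simp only [Finset.mem_filter, Finset.mem_univ, true_and] at hb ⊢
    rw [hpq]
    simpa using hb

lemma le_sortedDesc_of_count (v : Fin N → ℝ) (c : ℝ) (k : ℕ)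
    (hcount : k ≤ (Finset.univ.filter fun i => c ≤ v i).card)
    (j : Fin N) (hj : (j : ℕ) < k) : c ≤ sortedDesc v j := by
  by_contra h
  push_neg at h
  have hsub : (Finset.univ.filter fun i => c ≤ sortedDesc v i) ⊆ Finset.Iio j := by
    intro i hi
    simp only [Finset.mem_filter, Finset.mem_univ, true_and] at hi
    rw [Finset.mem_Iio]
    by_contra hij
    push_neg at hij
    exact absurd (hi.trans (sortedDesc_antitone v hij)) (not_le.mpr h)
  have hcard := Finset.card_le_card hsub
  rw [Fin.card_Iio] at hcard
  have heq : (Finset.univ.filter fun i => c ≤ sortedDesc v i).card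
      = (Finset.univ.filter fun i => c ≤ v i).card :=
    card_filter_perm (dperm v) (fun i => Iff.rfl)
  omega

lemma sortedDesc_eq_zero (v : Fin N → ℝ) (hv : ∀ i, 0 ≤ v i) (t : Fin N)
    (hcount : (Finset.univ.filter fun i => v i ≠ 0).card ≤ (t : ℕ)) :
    sortedDesc v t = 0 := by
  by_contra h
  have hpos : 0 < sortedDesc v t := lt_of_le_of_ne (hv _) (Ne.symm h)
  have hsub : Finset.Iic t ⊆ Finset.univ.filter fun i => sortedDesc v i ≠ 0 := by
    intro i hi
    rw [Finset.mem_Iic] at hi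
    simp only [Finset.mem_filter, Finset.mem_univ, true_and]
    exact ne_of_gt (lt_of_lt_of_le hpos (sortedDesc_antitone v hi))
  have hcard := Finset.card_le_card hsub
  rw [Fin.card_Iic] at hcard
  have heq : (Finset.univ.filter fun i => sortedDesc v i ≠ 0).card
      = (Finset.univ.filter fun i => v i ≠ 0).card :=
    card_filter_perm (dperm v) (fun i => Iff.rfl)
  omega

lemma antitone_monovary {f g : Fin N → ℝ} (hf : Antitone f) (hg : Antitone g) :
    Monovary f g := by
  intro i j hg_lt
  rcases le_total j i with hij | hij
  · exact hf hij
  · exact absurd (hg hij) (not_le.mpr hg_lt)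

lemma sum_mul_perm_le (lam v : Fin N → ℝ) (hlam : Antitone lam) (σ : Equiv.Perm (Fin N)) :
    ∑ j, lam j * v (σ j) ≤ ∑ j, lam j * sortedDesc v j := by
  have hmv : Monovary lam (sortedDesc v) :=
    antitone_monovary hlam (sortedDesc_antitone v)
  have hcomp : ∀ j, v (σ j) = sortedDesc v ((σ.trans (dperm v).symm) j) := by
    intro j
    simp [sortedDesc_eq, Function.comp]
  calc ∑ j, lam j * v (σ j)
      = ∑ j, lam j * sortedDesc v ((σ.trans (dperm v).symm) j) := by
        exact Finset.sum_congr rfl fun j _ => by rw [hcomp]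
    _ ≤ ∑ j, lam j * sortedDesc v j :=
        hmv.sum_mul_comp_perm_le_sum_mul


lemma key_pointwise {m : ℕ} (ytil : Fin m → ℝ) (lam : Fin m → ℝ)
    (hmono : ∀ i j : Fin m, i ≤ j → lam j ≤ lam i) (hnonneg : ∀ i, 0 ≤ lam i)
    (bh : Fin m → ℝ)
    (hmin : ∀ b : Fin m → ℝ,
      (1 / 2) * ∑ j, (ytil j - bh j) ^ 2 + ∑ j, lam j * sortedDesc (fun j' => |bh j'|) j
        ≤ (1 / 2) * ∑ j, (ytil j - b j) ^ 2 + ∑ j, lam j * sortedDesc (fun j' => |b j'|) j)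
    (r : ℕ) (hr1 : 1 ≤ r) (hrm : r ≤ m)
    (hcard : (Finset.univ.filter fun i => bh i ≠ 0).card = r)
    (i : Fin m) (hi : bh i ≠ 0) :
    lam ⟨r - 1, by omega⟩ ≤ |ytil i| := by
  classical
  set b : Fin m → ℝ := Function.update bh i 0 with hb
  have hbi : b i = 0 := Function.update_self i 0 bh
  have hbj : ∀ j, j ≠ i → b j = bh j := fun j hj => Function.update_of_ne hj 0 bh
  set rr : Fin m := ⟨r - 1, by omega⟩ with hrr
  have hlam_anti : Antitone lam := fun x y hxy => hmono x y hxy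
  -- count of nonzeros of b
  have hbcard : (Finset.univ.filter fun j => b j ≠ 0).card = r - 1 := by
    have hfe : (Finset.univ.filter fun j => b j ≠ 0)
        = (Finset.univ.filter fun j => bh j ≠ 0).erase i := by
      ext j
      simp only [Finset.mem_filter, Finset.mem_univ, true_and, Finset.mem_erase]
      constructor
      · intro hj
        have hji : j ≠ i := by
          intro hji; subst hji; exact hj hbi
        exact ⟨hji, by rw [← hbj j hji]; exact hj⟩
      · intro ⟨hji, hj⟩
        rw [hbj j hji]; exact hj
    rw [hfe, Finset.card_erase_of_mem, hcard]
    simp only [Finset.mem_filter, Finset.mem_univ, true_and]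
    exact hi
  -- the sorting permutation for |b|
  set τ : Equiv.Perm (Fin m) := dperm (fun j => |b j|) with hτ
  have hsb : ∀ j, sortedDesc (fun j' => |b j'|) j = |b (τ j)| := fun j => rfl
  have hsb_rr : sortedDesc (fun j' => |b j'|) rr = 0 := by
    apply sortedDesc_eq_zero _ (fun j => abs_nonneg _)
    have : (Finset.univ.filter fun j => |b j| ≠ 0)
        = (Finset.univ.filter fun j => b j ≠ 0) := by
      ext j; simp [abs_ne_zero]
    rw [this, hbcard]
  -- choose σ with σ.symm i ≤ rr and ∀ j, |b (σ j)| = sortedDesc |b| j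
  obtain ⟨σ, hσval, hσq⟩ :
      ∃ σ : Equiv.Perm (Fin m), (∀ j, |b (σ j)| = sortedDesc (fun j' => |b j'|) j)
        ∧ (σ.symm i : ℕ) ≤ r - 1 := by
    by_cases hp : ((τ.symm i : Fin m) : ℕ) ≤ r - 1
    · exact ⟨τ, fun j => (hsb j).symm, hp⟩
    · push_neg at hp
      set p : Fin m := τ.symm i with hpdef
      have hprr : p ≠ rr := by
        intro h; rw [h] at hp; simp [hrr] at hp
      refine ⟨(Equiv.swap rr p).trans τ, ?_, ?_⟩
      · intro j
        simp only [Equiv.trans_apply]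
        rcases eq_or_ne j rr with hjrr | hjrr
        · subst hjrr
          rw [Equiv.swap_apply_left, hpdef, Equiv.apply_symm_apply, hsb_rr]
          simpa using congrArg abs hbi
        · rcases eq_or_ne j p with hjp | hjp
          · subst hjp
            rw [Equiv.swap_apply_right, ← hsb rr, hsb_rr]
            have h1 : sortedDesc (fun j' => |b j'|) p ≤ 0 := by
              rw [← hsb_rr]
              exact sortedDesc_antitone _ (by rw [Fin.le_def]; simp only [hrr]; omega)
            have h2 : 0 ≤ sortedDesc (fun j' => |b j'|) p := by
              rw [hsb]; exact abs_nonneg _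
            linarith
          · rw [Equiv.swap_apply_of_ne_of_ne hjrr hjp, hsb]
      · have : ((Equiv.swap rr p).trans τ).symm i = rr := by
          rw [Equiv.symm_apply_eq]
          simp [hpdef]
        rw [this]
  set q : Fin m := σ.symm i with hq
  have hσi : σ q = i := Equiv.apply_symm_apply σ i
  -- penalty comparison
  have h2 : ∑ j, lam j * |bh (σ j)| = ∑ j, lam j * |b (σ j)| + lam q * |bh i| := by
    have e1 := Finset.add_sum_erase Finset.univ (fun j => lam j * |bh (σ j)|) (Finset.mem_univ q)
    have e2 := Finset.add_sum_erase Finset.univ (fun j => lam j * |b (σ j)|) (Finset.mem_univ q)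
    have eS : ∑ j ∈ Finset.univ.erase q, lam j * |bh (σ j)|
        = ∑ j ∈ Finset.univ.erase q, lam j * |b (σ j)| := by
      apply Finset.sum_congr rfl
      intro j hj
      have hjq : j ≠ q := (Finset.mem_erase.mp hj).1
      have : σ j ≠ i := by
        intro h; apply hjq; rw [hq, ← h, Equiv.symm_apply_apply]
      rw [hbj _ this]
    have hbq : |b (σ q)| = 0 := by rw [hσi, hbi, abs_zero]
    have hbhq : |bh (σ q)| = |bh i| := by rw [hσi]
    rw [← e1, ← e2, eS]
    simp only [hbq, hbhq, mul_zero]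
    ring
  have h3 : ∑ j, lam j * |b (σ j)| = ∑ j, lam j * sortedDesc (fun j' => |b j'|) j :=
    Finset.sum_congr rfl fun j _ => by rw [hσval j]
  have h1 : ∑ j, lam j * |bh (σ j)| ≤ ∑ j, lam j * sortedDesc (fun j' => |bh j'|) j :=
    sum_mul_perm_le lam (fun j' => |bh j'|) hlam_anti σ
  have h4 : lam rr ≤ lam q := hmono q rr (by rw [Fin.le_def]; simp only [hrr]; omega)
  have habs_nn : (0:ℝ) ≤ |bh i| := abs_nonneg _
  have hPen : ∑ j, lam j * sortedDesc (fun j' => |b j'|) j + lam rr * |bh i|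
      ≤ ∑ j, lam j * sortedDesc (fun j' => |bh j'|) j := by
    have := mul_le_mul_of_nonneg_right h4 habs_nn
    linarith [h1, h2.symm.le, h3.le]
  -- quadratic comparison
  have hQ : ∑ j, (ytil j - b j) ^ 2 - ∑ j, (ytil j - bh j) ^ 2
      = (ytil i) ^ 2 - (ytil i - bh i) ^ 2 := by
    rw [← Finset.sum_sub_distrib]
    rw [Finset.sum_eq_single i]
    · rw [hbi]; ring
    · intro j _ hji
      rw [hbj _ hji]; ring
    · intro h; exact absurd (Finset.mem_univ i) h
  have hm := hmin b
  have hbpos : 0 < |bh i| := abs_pos.mpr hi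
  have habs : ytil i * bh i ≤ |ytil i| * |bh i| := by
    rw [← abs_mul]; exact le_abs_self _
  have h5 : lam rr * |bh i| < |ytil i| * |bh i| := by
    nlinarith [sq_abs (bh i), sq_pos_of_ne_zero hi]
  exact le_of_lt (lt_of_mul_lt_mul_right h5 hbpos.le)

end SlopeAux


/-- **False-selection event bound for SLOPE under orthogonal design.** In the model
`y = Xβ + ε` with `XᵀX = I_m` and `ε ~ N(0, I_n)`, let `β̂` be the SLOPE estimator
applied to `ỹ = Xᵀy` with nonincreasing nonnegative weights, `R` its number of
nonzero coordinates and `V` its number of nonzero coordinates at true-null indices.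
Writing `|q̂|_(1) ≥ ... ≥ |q̂|_(m₀)` for the sorted absolute values of `ỹ` over the
`m₀` true-null indices, for all `1 ≤ k ≤ m₀` and `r ≥ 1`:
`{V ≥ k and R = r} ⊆ {|q̂|_(1) ≥ λ_r, ..., |q̂|_(k) ≥ λ_r, and R = r}`, and in
particular `P(V ≥ k and R = r) ≤ P(|q̂|_(k) ≥ λ_r and R = r)`. -/
theorem slope_false_selection_event_bound
    {Ω : Type*} [MeasurableSpace Ω] (P : Measure Ω) [IsProbabilityMeasure P]
    (n m : ℕ) (X : Matrix (Fin n) (Fin m) ℝ)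
    (hX : Xᵀ * X = 1)
    (β : Fin m → ℝ)
    (ε : Ω → Fin n → ℝ) (hεmeas : Measurable ε)
    (hε : Measure.map ε P = Measure.pi fun _ : Fin n => gaussianReal 0 1)
    (y : Ω → Fin n → ℝ) (hy : ∀ ω, y ω = X.mulVec β + ε ω)
    (lam : Fin m → ℝ)
    (hmono : ∀ i j : Fin m, i ≤ j → lam j ≤ lam i)
    (hnonneg : ∀ i, 0 ≤ lam i)
    (βhat : Ω → Fin m → ℝ)
    (hmin : ∀ ω, ∀ b : Fin m → ℝ,
      (1 / 2) * ∑ j, (Xᵀ.mulVec (y ω) j - βhat ω j) ^ 2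
          + ∑ j, lam j * sortedDesc (fun j' => |βhat ω j'|) j
        ≤ (1 / 2) * ∑ j, (Xᵀ.mulVec (y ω) j - b j) ^ 2
          + ∑ j, lam j * sortedDesc (fun j' => |b j'|) j)
    (k r : ℕ) (hk1 : 1 ≤ k)
    (hk : k ≤ (Finset.univ.filter fun i => β i = 0).card)
    (hr1 : 1 ≤ r) (hrm : r ≤ m) :
    ({ω : Ω | k ≤ (Finset.univ.filter fun i => β i = 0 ∧ βhat ω i ≠ 0).card
          ∧ (Finset.univ.filter fun i => βhat ω i ≠ 0).card = r}
        ⊆ {ω : Ω |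
            (∀ j : Fin (Finset.univ.filter fun i => β i = 0).card, (j : ℕ) < k →
              lam ⟨r - 1, by omega⟩ ≤
                sortedDesc (fun j' : Fin (Finset.univ.filter fun i => β i = 0).card =>
                  |Xᵀ.mulVec (y ω)
                    (((Finset.univ.filter fun i => β i = 0).equivFin.symm j' : ↥(Finset.univ.filter fun i => β i = 0)) : Fin m)|) j)
            ∧ (Finset.univ.filter fun i => βhat ω i ≠ 0).card = r})
      ∧ P {ω : Ω | k ≤ (Finset.univ.filter fun i => β i = 0 ∧ βhat ω i ≠ 0).card
            ∧ (Finset.univ.filter fun i => βhat ω i ≠ 0).card = r}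
          ≤ P {ω : Ω |
              lam ⟨r - 1, by omega⟩ ≤
                sortedDesc (fun j' : Fin (Finset.univ.filter fun i => β i = 0).card =>
                  |Xᵀ.mulVec (y ω)
                    (((Finset.univ.filter fun i => β i = 0).equivFin.symm j' : ↥(Finset.univ.filter fun i => β i = 0)) : Fin m)|) ⟨k - 1, by omega⟩
              ∧ (Finset.univ.filter fun i => βhat ω i ≠ 0).card = r} := by
  
  have hFpos : 0 < (Finset.univ.filter fun i => β i = 0).card := lt_of_lt_of_le hk1 hk
  have hincl : {ω : Ω | k ≤ (Finset.univ.filter fun i => β i = 0 ∧ βhat ω i ≠ 0).card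
          ∧ (Finset.univ.filter fun i => βhat ω i ≠ 0).card = r}
        ⊆ {ω : Ω |
            (∀ j : Fin (Finset.univ.filter fun i => β i = 0).card, (j : ℕ) < k →
              lam ⟨r - 1, by omega⟩ ≤
                sortedDesc (fun j' : Fin (Finset.univ.filter fun i => β i = 0).card =>
                  |Xᵀ.mulVec (y ω)
                    (((Finset.univ.filter fun i => β i = 0).equivFin.symm j' : ↥(Finset.univ.filter fun i => β i = 0)) : Fin m)|) j)
            ∧ (Finset.univ.filter fun i => βhat ω i ≠ 0).card = r} := by
    intro ω hω
    obtain ⟨hV, hR⟩ := hω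
    refine ⟨?_, hR⟩
    intro j hj
    have hkey : ∀ i : Fin m, βhat ω i ≠ 0 →
        lam ⟨r - 1, by omega⟩ ≤ |Xᵀ.mulVec (y ω) i| := fun i hi =>
      SlopeAux.key_pointwise (Xᵀ.mulVec (y ω)) lam hmono hnonneg (βhat ω)
        (hmin ω) r hr1 hrm hR i hi
    apply SlopeAux.le_sortedDesc_of_count _ _ k ?_ j hj
    have hle : (Finset.univ.filter fun i => β i = 0 ∧ βhat ω i ≠ 0).card ≤
        (Finset.univ.filter fun j' : Fin (Finset.univ.filter fun i => β i = 0).card =>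
          lam ⟨r - 1, by omega⟩ ≤
            |Xᵀ.mulVec (y ω)
              (((Finset.univ.filter fun i => β i = 0).equivFin.symm j' :
                ↥(Finset.univ.filter fun i => β i = 0)) : Fin m)|).card := by
      apply Finset.card_le_card_of_injOn
        (fun i => if h : i ∈ (Finset.univ.filter fun i => β i = 0)
          then (Finset.univ.filter fun i => β i = 0).equivFin ⟨i, h⟩ else ⟨0, hFpos⟩)
      · intro i hiG
        simp only [Finset.coe_filter, Set.mem_setOf_eq, Finset.mem_filter, Finset.mem_univ, true_and] at hiG
        have hiF : i ∈ Finset.univ.filter fun i => β i = 0 := by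
          simp [hiG.1]
        simp only [dif_pos hiF]
        simp only [Finset.coe_filter, Set.mem_setOf_eq, Finset.mem_filter, Finset.mem_univ, true_and, Equiv.symm_apply_apply]
        exact hkey i hiG.2
      · intro i1 h1 i2 h2 hf
        simp only [Finset.coe_filter, Set.mem_setOf_eq, Finset.mem_univ, true_and] at h1 h2
        have h1F : i1 ∈ Finset.univ.filter fun i => β i = 0 := by simp [h1.1]
        have h2F : i2 ∈ Finset.univ.filter fun i => β i = 0 := by simp [h2.1]
        simp only [dif_pos h1F, dif_pos h2F] at hf
        have := (Finset.univ.filter fun i => β i = 0).equivFin.injective hf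
        exact congrArg (fun x : ↥(Finset.univ.filter fun i => β i = 0) => (x : Fin m)) this
    exact le_trans hV hle
  refine ⟨hincl, measure_mono (hincl.trans ?_)⟩
  intro ω hω
  exact ⟨hω.1 ⟨k - 1, by omega⟩ (by simp; omega), hω.2⟩
end
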